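/- arXiv:1512.02496 — 6 statements merged into one kernel-verified Lean document; each statement's English description precedes it below -/
import Mathlib

section
/- Let G be a finite simple graph with minimum degree exactly 2, with average degree 2|E(G)|/|V(G)| strictly less than 14/5, and containing no triangle in which two of the three vertices have degree 2. Then G contains at least one of: a path v1v2v3v4 with deg(v1)=deg(v4)=2, deg(v2)=2, deg(v3) ≤ 13; a path v1v2v3 with deg(v1)=2, deg(v2) ≤ 3, deg(v3) ≤ 3; or a star with center w of degree 4 whose four neighbors have degrees 2, 2, 2, and at most 3. -/
open SimpleGraph Finset

set_option linter.unusedSectionVars false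

section Aux
variable {V : Type} [Fintype V] [DecidableEq V] (G : SimpleGraph V) [DecidableRel G.Adj]

/-- `heavyAux G u` : u has a neighbor of degree 2. -/
def heavyAux (u : V) : Prop := ∃ x ∈ G.neighborFinset u, G.degree x = 2

open scoped Classical in
/-- discharging rule: amount sent from `w` to `u`. -/
noncomputable def giveAux (w u : V) : ℚ :=
  if G.degree u = 2 then
    (if 3 ≤ G.degree w then (if heavyAux G u then 4/5 else 2/5) else 0)
  else if G.degree u = 3 ∧ 4 ≤ G.degree w ∧ heavyAux G u then 1/10
  else 0

lemma giveAux_nonneg (w u : V) : 0 ≤ giveAux G w u := by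
  unfold giveAux; split_ifs <;> norm_num

lemma giveAux_le (w u : V) : giveAux G w u ≤ 4/5 := by
  unfold giveAux; split_ifs <;> norm_num

lemma giveAux_le_tenth (w u : V) (h : G.degree u ≠ 2) : giveAux G w u ≤ 1/10 := by
  unfold giveAux; rw [if_neg h]; split_ifs <;> norm_num

lemma giveAux_eq_zero_of_sender_small (w u : V) (h : G.degree w ≤ 2) : giveAux G w u = 0 := by
  unfold giveAux; split_ifs <;> try rfl
  all_goals omega

/-- the swap lemma: total sent = total received. -/
lemma sum_sent_eq_sum_recv (f : V → V → ℚ) :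
    ∑ v, ∑ u ∈ G.neighborFinset v, f v u = ∑ v, ∑ u ∈ G.neighborFinset v, f u v := by
  calc ∑ v, ∑ u ∈ G.neighborFinset v, f v u
      = ∑ v : V, ∑ u : V, if G.Adj v u then f v u else 0 := by
        refine Finset.sum_congr rfl fun v _ => ?_
        rw [neighborFinset_eq_filter, sum_filter]
    _ = ∑ u : V, ∑ v : V, if G.Adj v u then f v u else 0 := Finset.sum_comm
    _ = ∑ u, ∑ v ∈ G.neighborFinset u, f v u := by
        refine Finset.sum_congr rfl fun u _ => ?_
        rw [neighborFinset_eq_filter, sum_filter]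
        refine Finset.sum_congr rfl fun v _ => ?_
        by_cases hadj : G.Adj v u
        · rw [if_pos hadj, if_pos hadj.symm]
        · rw [if_neg hadj, if_neg (fun h' => hadj h'.symm)]

end Aux

section Aux2
variable {V : Type} [Fintype V] [DecidableEq V] (G : SimpleGraph V) [DecidableRel G.Adj]

lemma giveAux_eq_heavy (w u : V) (hu : G.degree u = 2) (hw : 3 ≤ G.degree w)
    (hh : heavyAux G u) : giveAux G w u = 4/5 := by
  unfold giveAux; rw [if_pos hu, if_pos hw, if_pos hh]

lemma giveAux_eq_light (w u : V) (hu : G.degree u = 2) (hw : 3 ≤ G.degree w)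
    (hh : ¬ heavyAux G u) : giveAux G w u = 2/5 := by
  unfold giveAux; rw [if_pos hu, if_pos hw, if_neg hh]

lemma giveAux_eq_needy (w u : V) (hu : G.degree u = 3) (hw : 4 ≤ G.degree w)
    (hh : heavyAux G u) : giveAux G w u = 1/10 := by
  unfold giveAux
  rw [if_neg (by omega), if_pos ⟨hu, hw, hh⟩]

lemma giveAux_eq_zero_of_deg (w u : V) (h2 : G.degree u ≠ 2) (h3 : G.degree u ≠ 3) :
    giveAux G w u = 0 := by
  unfold giveAux
  rw [if_neg h2, if_neg (by tauto)]

lemma giveAux_eq_zero' (w u : V) (hw : G.degree w ≤ 3) (h2 : G.degree u ≠ 2) :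
    giveAux G w u = 0 := by
  unfold giveAux
  rw [if_neg h2, if_neg (by omega)]

end Aux2
set_option linter.unusedSectionVars false
set_option maxHeartbeats 1000000

section Aux3
variable {V : Type} [Fintype V] [DecidableEq V] (G : SimpleGraph V) [DecidableRel G.Adj]

lemma heavyAux_def (u : V) : heavyAux G u ↔ ∃ x, G.Adj u x ∧ G.degree x = 2 := by
  unfold heavyAux
  simp [mem_neighborFinset]

/-- main pointwise charge lemma -/
lemma charge_ge
    (hδ1 : ∀ v, 2 ≤ G.degree v)
    (htri : ¬ ∃ a b c : V, G.Adj a b ∧ G.Adj b c ∧ G.Adj a c ∧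
      G.degree a = 2 ∧ G.degree b = 2)
    (nc1 : ¬ (∃ v₁ v₂ v₃ v₄ : V, G.Adj v₁ v₂ ∧ G.Adj v₂ v₃ ∧ G.Adj v₃ v₄ ∧
        v₁ ≠ v₃ ∧ v₁ ≠ v₄ ∧ v₂ ≠ v₄ ∧
        G.degree v₁ = 2 ∧ G.degree v₂ = 2 ∧ G.degree v₃ ≤ 13 ∧ G.degree v₄ = 2))
    (nc2 : ¬ (∃ v₁ v₂ v₃ : V, G.Adj v₁ v₂ ∧ G.Adj v₂ v₃ ∧ v₁ ≠ v₃ ∧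
        G.degree v₁ = 2 ∧ G.degree v₂ ≤ 3 ∧ G.degree v₃ ≤ 3))
    (nc3 : ¬ (∃ w a b c d : V, G.Adj w a ∧ G.Adj w b ∧ G.Adj w c ∧ G.Adj w d ∧
        a ≠ b ∧ a ≠ c ∧ a ≠ d ∧ b ≠ c ∧ b ≠ d ∧ c ≠ d ∧
        G.degree w = 4 ∧ G.degree a = 2 ∧ G.degree b = 2 ∧ G.degree c = 2 ∧
        G.degree d ≤ 3))
    (v : V) :
    (14/5 : ℚ) ≤ (G.degree v : ℚ) - (∑ u ∈ G.neighborFinset v, giveAux G v u)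
      + ∑ u ∈ G.neighborFinset v, giveAux G u v := by
  -- helper from nc2
  have hB : ∀ a b c : V, G.Adj a b → G.Adj b c → a ≠ c → G.degree a = 2 →
      G.degree b ≤ 3 → 4 ≤ G.degree c := by
    intro a b c h1 h2 h3 h4 h5
    by_contra h
    exact nc2 ⟨a, b, c, h1, h2, h3, h4, h5, by omega⟩
  have hcard : (G.neighborFinset v).card = G.degree v := G.card_neighborFinset_eq_degree v
  have hrecv_nonneg : (0:ℚ) ≤ ∑ u ∈ G.neighborFinset v, giveAux G u v :=
    Finset.sum_nonneg fun u _ => giveAux_nonneg G u v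
  rcases lt_or_ge (G.degree v) 4 with hlt | hge
  · have h23 : G.degree v = 2 ∨ G.degree v = 3 := by have := hδ1 v; omega
    rcases h23 with hd2 | hd3
    · -- degree 2 case
      have hsent : (∑ u ∈ G.neighborFinset v, giveAux G v u) = 0 :=
        Finset.sum_eq_zero fun u _ => giveAux_eq_zero_of_sender_small G v u (le_of_eq hd2)
      have hdq : (G.degree v : ℚ) = 2 := by exact_mod_cast hd2
      rw [hsent, hdq]
      by_cases hv : heavyAux G v
      · -- heavy: some neighbor w with degree ≥ 4 gives 4/5
        obtain ⟨x, hxN, hx2⟩ := hv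
        have hxadj : G.Adj v x := (mem_neighborFinset G v x).1 hxN
        have h2 : (G.neighborFinset v).card = 2 := by omega
        obtain ⟨a, b, hab, hNv⟩ := card_eq_two.1 h2
        have key : ∀ w ∈ G.neighborFinset v, w ≠ x → giveAux G w v = 4/5 := by
          intro w hwN hwx
          have hwadj : G.Adj v w := (mem_neighborFinset G v w).1 hwN
          have h4 : 4 ≤ G.degree w :=
            hB x v w hxadj.symm hwadj (fun h => hwx h.symm) hx2 (by omega)
          exact giveAux_eq_heavy G w v hd2 (by omega) ⟨x, hxN, hx2⟩
        have hx_ab : x = a ∨ x = b := by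
          have := hxN; rw [hNv] at this; simpa using this
        obtain ⟨w, hwN, hww⟩ : ∃ w ∈ G.neighborFinset v, giveAux G w v = 4/5 := by
          rcases hx_ab with rfl | rfl
          · exact ⟨b, by rw [hNv]; simp, key b (by rw [hNv]; simp) (Ne.symm hab)⟩
          · exact ⟨a, by rw [hNv]; simp, key a (by rw [hNv]; simp) hab⟩
        have : (4/5 : ℚ) ≤ ∑ u ∈ G.neighborFinset v, giveAux G u v := by
          rw [← hww]
          exact Finset.single_le_sum (fun u _ => giveAux_nonneg G u v) hwN
        linarith
      · -- light: both neighbors have degree ≥ 3, each gives 2/5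
        have hall : ∀ u ∈ G.neighborFinset v, giveAux G u v = 2/5 := by
          intro u huN
          have hu2 : G.degree u ≠ 2 := fun h => hv ⟨u, huN, h⟩
          have : 3 ≤ G.degree u := by have := hδ1 u; omega
          exact giveAux_eq_light G u v hd2 this hv
        have : ∑ u ∈ G.neighborFinset v, giveAux G u v = (G.neighborFinset v).card • (2/5 : ℚ) := by
          rw [Finset.sum_congr rfl hall, Finset.sum_const]
        rw [this, hcard, hd2]
        norm_num
    · -- degree 3 case
      have hdq : (G.degree v : ℚ) = 3 := by exact_mod_cast hd3
      by_cases hS : ∃ u ∈ G.neighborFinset v, G.degree u = 2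
      · obtain ⟨u, huN, hu2⟩ := hS
        have huadj : G.Adj v u := (mem_neighborFinset G v u).1 huN
        -- u is light
        have hulight : ¬ heavyAux G u := by
          rintro ⟨y, hyN, hy2⟩
          have hyadj : G.Adj u y := (mem_neighborFinset G u y).1 hyN
          have hyv : y ≠ v := fun h => by rw [h, hd3] at hy2; omega
          have := hB y u v hyadj.symm huadj.symm hyv hy2 (by omega)
          omega
        -- all other neighbors have degree ≥ 4
        have hothers : ∀ w ∈ G.neighborFinset v, w ≠ u → 4 ≤ G.degree w := by
          intro w hwN hwu
          exact hB u v w huadj.symm ((mem_neighborFinset G v w).1 hwN)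
            (fun h => hwu h.symm) hu2 (by omega)
        -- sent = 2/5
        have hsent : (∑ w ∈ G.neighborFinset v, giveAux G v w) = 2/5 := by
          rw [← Finset.add_sum_erase _ _ huN]
          rw [giveAux_eq_light G v u hu2 (by omega) hulight]
          have : ∑ w ∈ (G.neighborFinset v).erase u, giveAux G v w = 0 :=
            Finset.sum_eq_zero fun w hw => by
              have hwN := Finset.mem_of_mem_erase hw
              have hwu := Finset.ne_of_mem_erase hw
              have := hothers w hwN hwu
              exact giveAux_eq_zero_of_deg G v w (by omega) (by omega)
          rw [this]; ring
        -- recv ≥ 2/10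
        have hrecv : (2/10 : ℚ) ≤ ∑ w ∈ G.neighborFinset v, giveAux G w v := by
          rw [← Finset.add_sum_erase _ _ huN]
          have h1 : ∑ w ∈ (G.neighborFinset v).erase u, giveAux G w v = 2/10 := by
            have heach : ∀ w ∈ (G.neighborFinset v).erase u, giveAux G w v = 1/10 := by
              intro w hw
              exact giveAux_eq_needy G w v hd3
                (hothers w (Finset.mem_of_mem_erase hw) (Finset.ne_of_mem_erase hw))
                ⟨u, huN, hu2⟩
            rw [Finset.sum_congr rfl heach, Finset.sum_const,
              Finset.card_erase_of_mem huN, hcard, hd3]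
            norm_num
          rw [h1]
          have := giveAux_nonneg G u v
          linarith
        rw [hsent, hdq]
        linarith
      · push_neg at hS
        have hsent : (∑ w ∈ G.neighborFinset v, giveAux G v w) = 0 :=
          Finset.sum_eq_zero fun w hw =>
            giveAux_eq_zero' G v w (by omega) (hS w hw)
        rw [hsent, hdq]
        linarith
  ·
    -- degree ≥ 4
    suffices hsb : (∑ u ∈ G.neighborFinset v, giveAux G v u) ≤ (G.degree v : ℚ) - 14/5 by
      linarith
    rcases le_or_gt 14 (G.degree v) with h14 | h13
    · -- very big degree
      have h1 : (∑ u ∈ G.neighborFinset v, giveAux G v u)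
          ≤ (G.neighborFinset v).card • (4/5 : ℚ) :=
        Finset.sum_le_card_nsmul _ _ _ fun u _ => giveAux_le G v u
      rw [hcard, nsmul_eq_mul] at h1
      have h14q : (14:ℚ) ≤ (G.degree v : ℚ) := by exact_mod_cast h14
      linarith
    · have hd13 : G.degree v ≤ 13 := by omega
      by_cases hheavy : ∃ u ∈ (G.neighborFinset v).filter (fun u => G.degree u = 2),
          heavyAux G u
      · -- v has a heavy degree-2 neighbor u; it is v's unique degree-2 neighbor
        obtain ⟨u, huS, x, hxN, hx2⟩ := hheavy
        obtain ⟨huN, hu2⟩ := Finset.mem_filter.1 huS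
        have huadj : G.Adj v u := (mem_neighborFinset G v u).1 huN
        have hxadj : G.Adj u x := (mem_neighborFinset G u x).1 hxN
        have huniq : ∀ w ∈ G.neighborFinset v, w ≠ u → G.degree w ≠ 2 := by
          intro w hwN hwu hw2
          have hwadj : G.Adj v w := (mem_neighborFinset G v w).1 hwN
          have hxv : x ≠ v := fun h => by rw [h] at hx2; omega
          have hxw : x ≠ w := by
            rintro rfl
            exact htri ⟨u, x, v, hxadj, hwadj.symm, huadj.symm, hu2, hx2⟩
          exact nc1 ⟨x, u, v, w, hxadj.symm, huadj.symm, hwadj, hxv, hxw,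
            fun h => hwu h.symm, hx2, hu2, hd13, hw2⟩
        rw [← Finset.add_sum_erase _ _ huN]
        have h1 : ∑ w ∈ (G.neighborFinset v).erase u, giveAux G v w
            ≤ ((G.neighborFinset v).erase u).card • (1/10 : ℚ) :=
          Finset.sum_le_card_nsmul _ _ _ fun w hw =>
            giveAux_le_tenth G v w
              (huniq w (Finset.mem_of_mem_erase hw) (Finset.ne_of_mem_erase hw))
        rw [Finset.card_erase_of_mem huN, hcard, nsmul_eq_mul] at h1
        have h2 := giveAux_le G v u
        have hc : ((G.degree v - 1 : ℕ) : ℚ) = (G.degree v : ℚ) - 1 := by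
          have : 1 ≤ G.degree v := by omega
          push_cast [Nat.cast_sub this]
          ring
        rw [hc] at h1
        have h4q : (4:ℚ) ≤ (G.degree v : ℚ) := by exact_mod_cast hge
        linarith
      · -- all degree-2 neighbors are light
        push_neg at hheavy
        rw [← Finset.sum_filter_add_sum_filter_not (G.neighborFinset v)
          (fun u => G.degree u = 2)]
        set S := (G.neighborFinset v).filter (fun u => G.degree u = 2) with hSdef
        have hkd : S.card ≤ G.degree v := by
          rw [← hcard]; exact Finset.card_filter_le _ _
        have hlight : ∀ u ∈ S, giveAux G v u = 2/5 := fun u hu =>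
          giveAux_eq_light G v u (Finset.mem_filter.1 hu).2 (by omega) (hheavy u hu)
        have h1 : ∑ u ∈ S, giveAux G v u = S.card • (2/5 : ℚ) := by
          rw [Finset.sum_congr rfl hlight, Finset.sum_const]
        have h2 : ∑ u ∈ (G.neighborFinset v).filter (fun u => ¬ G.degree u = 2),
            giveAux G v u
            ≤ ((G.neighborFinset v).filter (fun u => ¬ G.degree u = 2)).card • (1/10 : ℚ) :=
          Finset.sum_le_card_nsmul _ _ _ fun w hw =>
            giveAux_le_tenth G v w (Finset.mem_filter.1 hw).2
        have hccomp : ((G.neighborFinset v).filter (fun u => ¬ G.degree u = 2)).card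
            = G.degree v - S.card := by
          have := Finset.card_filter_add_card_filter_not
            (s := G.neighborFinset v) (p := fun u => G.degree u = 2)
          rw [hcard, ← hSdef] at this
          omega
        rw [h1, nsmul_eq_mul]
        have hcc : ((G.degree v - S.card : ℕ) : ℚ) = (G.degree v : ℚ) - S.card := by
          push_cast [Nat.cast_sub hkd]; ring
        rw [hccomp, nsmul_eq_mul, hcc] at h2
        have hkq : (S.card : ℚ) ≤ (G.degree v : ℚ) := by exact_mod_cast hkd
        have hkq0 : (0:ℚ) ≤ (S.card : ℚ) := by positivity
        rcases le_or_gt 5 (G.degree v) with h5 | h5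
        · have h5q : (5:ℚ) ≤ (G.degree v : ℚ) := by exact_mod_cast h5
          linarith
        · have hd4 : G.degree v = 4 := by omega
          have hd4q : (G.degree v : ℚ) = 4 := by exact_mod_cast hd4
          rcases le_or_gt S.card 2 with hk2 | hk3
          · have hk2q : (S.card : ℚ) ≤ 2 := by exact_mod_cast hk2
            linarith
          · -- S.card ≥ 3: then S.card = 3 and every other neighbor has degree ≥ 4
            obtain ⟨T, hTsub, hT3⟩ := Finset.exists_subset_card_eq hk3
            obtain ⟨a, b, c, hab, hac, hbc, hTeq⟩ := Finset.card_eq_three.1 hT3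
            have haS : a ∈ S := hTsub (by rw [hTeq]; simp)
            have hbS : b ∈ S := hTsub (by rw [hTeq]; simp)
            have hcS : c ∈ S := hTsub (by rw [hTeq]; simp)
            obtain ⟨haN, ha2⟩ := Finset.mem_filter.1 haS
            obtain ⟨hbN, hb2⟩ := Finset.mem_filter.1 hbS
            obtain ⟨hcN, hc2⟩ := Finset.mem_filter.1 hcS
            -- every neighbor of v of degree ≠ 2 has degree ≥ 4
            have hbig : ∀ w ∈ (G.neighborFinset v).filter (fun u => ¬ G.degree u = 2),
                giveAux G v w = 0 := by
              intro w hw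
              obtain ⟨hwN, hw2⟩ := Finset.mem_filter.1 hw
              have hwa : w ≠ a := fun h => hw2 (by rw [h]; exact ha2)
              have hwb : w ≠ b := fun h => hw2 (by rw [h]; exact hb2)
              have hwc : w ≠ c := fun h => hw2 (by rw [h]; exact hc2)
              have hw4 : 4 ≤ G.degree w := by
                by_contra hcon
                exact nc3 ⟨v, a, b, c, w, (mem_neighborFinset G v a).1 haN,
                  (mem_neighborFinset G v b).1 hbN, (mem_neighborFinset G v c).1 hcN,
                  (mem_neighborFinset G v w).1 hwN, hab, hac, Ne.symm hwa, hbc,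
                  Ne.symm hwb, Ne.symm hwc, hd4, ha2, hb2, hc2, by omega⟩
              exact giveAux_eq_zero_of_deg G v w hw2 (by omega)
            -- S has at most 3 elements
            have hSsub : S ⊆ ({a, b, c} : Finset V) := by
              intro z hzS
              obtain ⟨hzN, hz2⟩ := Finset.mem_filter.1 hzS
              by_contra hz3
              have hza : z ≠ a := fun h => hz3 (by rw [h]; simp)
              have hzb : z ≠ b := fun h => hz3 (by rw [h]; simp)
              have hzc : z ≠ c := fun h => hz3 (by rw [h]; simp)
              exact nc3 ⟨v, a, b, c, z, (mem_neighborFinset G v a).1 haN,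
                (mem_neighborFinset G v b).1 hbN, (mem_neighborFinset G v c).1 hcN,
                (mem_neighborFinset G v z).1 hzN, hab, hac, Ne.symm hza, hbc,
                Ne.symm hzb, Ne.symm hzc, hd4, ha2, hb2, hc2, by omega⟩
            have hcard3 : S.card ≤ 3 := by
              apply le_trans (Finset.card_le_card hSsub)
              apply le_trans (Finset.card_insert_le _ _)
              have h22 : ({b, c} : Finset V).card ≤ 2 := by
                apply le_trans (Finset.card_insert_le _ _)
                simp
              omega
            have hsum0 : ∑ u ∈ (G.neighborFinset v).filter (fun u => ¬ G.degree u = 2),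
                giveAux G v u = 0 := Finset.sum_eq_zero hbig
            have hk3q : (S.card : ℚ) ≤ 3 := by exact_mod_cast hcard3
            rw [hsum0, hd4q]
            linarith


end Aux3

theorem stmt_5 {V : Type} [Fintype V] [DecidableEq V] (G : SimpleGraph V)
    [DecidableRel G.Adj]
    (hδ : (∀ v, 2 ≤ G.degree v) ∧ (∃ v, G.degree v = 2))
    (havg : (2 * G.edgeFinset.card : ℚ) / Fintype.card V < 14 / 5)
    (htri : ¬ ∃ a b c : V, G.Adj a b ∧ G.Adj b c ∧ G.Adj a c ∧
      G.degree a = 2 ∧ G.degree b = 2) :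
    (∃ v₁ v₂ v₃ v₄ : V, G.Adj v₁ v₂ ∧ G.Adj v₂ v₃ ∧ G.Adj v₃ v₄ ∧
        v₁ ≠ v₃ ∧ v₁ ≠ v₄ ∧ v₂ ≠ v₄ ∧
        G.degree v₁ = 2 ∧ G.degree v₂ = 2 ∧ G.degree v₃ ≤ 13 ∧ G.degree v₄ = 2) ∨
    (∃ v₁ v₂ v₃ : V, G.Adj v₁ v₂ ∧ G.Adj v₂ v₃ ∧ v₁ ≠ v₃ ∧
        G.degree v₁ = 2 ∧ G.degree v₂ ≤ 3 ∧ G.degree v₃ ≤ 3) ∨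
    (∃ w a b c d : V, G.Adj w a ∧ G.Adj w b ∧ G.Adj w c ∧ G.Adj w d ∧
        a ≠ b ∧ a ≠ c ∧ a ≠ d ∧ b ≠ c ∧ b ≠ d ∧ c ≠ d ∧
        G.degree w = 4 ∧ G.degree a = 2 ∧ G.degree b = 2 ∧ G.degree c = 2 ∧
        G.degree d ≤ 3) := by
  by_contra hcon
  have nc1 := fun h => hcon (Or.inl h)
  have nc2 := fun h => hcon (Or.inr (Or.inl h))
  have nc3 := fun h => hcon (Or.inr (Or.inr h))
  obtain ⟨hδ1, v0, hv0⟩ := hδ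
  have hpt := charge_ge G hδ1 htri nc1 nc2 nc3
  have hswap := sum_sent_eq_sum_recv G (giveAux G)
  have hsum : ∑ v : V, ((G.degree v : ℚ)
        - (∑ u ∈ G.neighborFinset v, giveAux G v u)
        + ∑ u ∈ G.neighborFinset v, giveAux G u v)
      = ∑ v : V, (G.degree v : ℚ) := by
    rw [Finset.sum_add_distrib, Finset.sum_sub_distrib, hswap]
    ring
  have hlb : (14/5 : ℚ) * Fintype.card V ≤ ∑ v : V, (G.degree v : ℚ) := by
    rw [← hsum]
    calc (14/5 : ℚ) * Fintype.card V = ∑ _v : V, (14/5 : ℚ) := by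
          rw [Finset.sum_const, Finset.card_univ, nsmul_eq_mul, mul_comm]
      _ ≤ _ := Finset.sum_le_sum fun v _ => hpt v
  have hdeg : ∑ v : V, (G.degree v : ℚ) = 2 * G.edgeFinset.card := by
    exact_mod_cast congrArg (Nat.cast : ℕ → ℚ) G.sum_degrees_eq_twice_card_edges
  have hne : Nonempty V := ⟨v0⟩
  have hn : (0:ℚ) < Fintype.card V := by
    have := Fintype.card_pos (α := V)
    exact_mod_cast this
  rw [div_lt_iff₀ hn] at havg
  linarith
end

section
/- Let G be a finite simple graph with minimum degree exactly 2, with average degree strictly less than 3, and containing no triangle in which two vertices have degree 2. Then G contains at least one of the following configurations: a path (2, 3^-, 3^-); a path v1v2v3v4 with degrees 2, 2, arbitrary, 2; a path with degrees (2, 2, 4, 3); a star with 4-vertex center whose neighbors have degrees 2, 2, 2, ≤6; a star with 4-vertex center and neighbor degrees 2, 2, 3, ≤5; a star with 4-vertex center and neighbor degrees 2, 3, 3, 3; a star with 5-vertex center and neighbor degrees 2, 2, 2, 2, 2; or a star with 5-vertex center and neighbor degrees 2, 2, 2, 2, 3. -/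
/-!
Discharging. Every vertex `v` starts with charge `deg v - 3`, so the total charge
`2|E| - 3|V|` is negative. Charge then moves along edges: a vertex of degree 3 sends `1/2` to
each neighbour of degree 2; a vertex of degree at least 4 sends `1/2` to each neighbour of
degree 2 (`1` if that neighbour is heavy, i.e. itself adjacent to a vertex of degree 2) and `1/4`
to each neighbour of degree 3 that is adjacent to a vertex of degree 2; vertices of degree 6 and
of degree at least 7 send `1/4` and `1/2` to each neighbour of degree 4. The total is unchanged,
yet if no configuration occurs every vertex ends with nonnegative charge. The paths force the
other neighbours of a vertex next to a heavy vertex to have degree at least 3 (at least 4 when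
that vertex has degree 4), and the stars bound how much a vertex of degree 4 or 5 gives away.
-/

open Finset

namespace SimpleGraph

section Transfer

variable {V : Type*} [Fintype V] (G : SimpleGraph V) [DecidableRel G.Adj]

def HasDegTwoNeighbor (v : V) : Prop := ∃ u, G.Adj v u ∧ G.degree u = 2

instance : DecidablePred G.HasDegTwoNeighbor := fun _ ↦ inferInstanceAs (Decidable (∃ _, _))

def IsHeavy (v : V) : Prop := G.degree v = 2 ∧ G.HasDegTwoNeighbor v

def transfer (a b : V) : ℚ :=
  if G.degree b = 2 then
    if 4 ≤ G.degree a then (if G.HasDegTwoNeighbor b then 1 else 1 / 2)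
    else if G.degree a = 3 then 1 / 2 else 0
  else if G.degree b = 3 ∧ G.HasDegTwoNeighbor b then (if 4 ≤ G.degree a then 1 / 4 else 0)
  else if G.degree b = 4 then
    (if 7 ≤ G.degree a then 1 / 2 else if G.degree a = 6 then 1 / 4 else 0)
  else 0

def chargeOut (v : V) : ℚ := ∑ u ∈ G.neighborFinset v, G.transfer v u

def chargeIn (v : V) : ℚ := ∑ u ∈ G.neighborFinset v, G.transfer u v

variable {G} {a b : V}

lemma transfer_nonneg (a b : V) : 0 ≤ G.transfer a b := by
  unfold transfer; split_ifs <;> grind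

lemma transfer_le_one (a b : V) : G.transfer a b ≤ 1 := by
  unfold transfer; split_ifs <;> grind

lemma transfer_le_half (hb : ¬ G.IsHeavy b) : G.transfer a b ≤ 1 / 2 := by
  unfold transfer IsHeavy at *; split_ifs <;> grind

lemma transfer_le_quarter (ha : G.degree a ≤ 6) (hb : 3 ≤ G.degree b) :
    G.transfer a b ≤ 1 / 4 := by
  unfold transfer; split_ifs <;> grind

lemma transfer_le_of_degree_le_five (ha : G.degree a ≤ 5) (hb : ¬ G.IsHeavy b) :
    G.transfer a b ≤
      (if G.degree b = 2 then 1 / 2 else 0) + (if G.degree b = 3 then 1 / 4 else 0) := by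
  unfold transfer IsHeavy at *; split_ifs <;> grind

lemma transfer_eq_zero_of_degree_eq_two (ha : G.degree a = 2) : G.transfer a b = 0 := by
  unfold transfer; split_ifs <;> grind

lemma transfer_eq_zero_of_degree_eq_three (ha : G.degree a = 3) (hb : G.degree b ≠ 2) :
    G.transfer a b = 0 := by
  unfold transfer; split_ifs <;> grind

lemma transfer_eq_half_of_degree_eq_three (ha : G.degree a = 3) (hb : G.degree b = 2) :
    G.transfer a b = 1 / 2 := by
  rw [transfer, if_pos hb, if_neg (by omega), if_pos ha]

lemma transfer_eq_zero_of_four_le (ha : G.degree a ≤ 5) (hb : 4 ≤ G.degree b) :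
    G.transfer a b = 0 := by
  unfold transfer; split_ifs <;> grind

lemma transfer_eq_one (ha : 4 ≤ G.degree a) (hb : G.IsHeavy b) : G.transfer a b = 1 := by
  rw [transfer, if_pos hb.1, if_pos ha, if_pos hb.2]

lemma half_le_transfer_of_degree_eq_two (ha : 3 ≤ G.degree a) (hb : G.degree b = 2) :
    1 / 2 ≤ G.transfer a b := by
  unfold transfer; split_ifs <;> grind

lemma quarter_le_transfer_of_degree_eq_three (ha : 4 ≤ G.degree a) (hb : G.degree b = 3)
    (hb' : G.HasDegTwoNeighbor b) : 1 / 4 ≤ G.transfer a b := by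
  unfold transfer; split_ifs <;> grind

lemma quarter_le_transfer_of_degree_eq_four (ha : 6 ≤ G.degree a) (hb : G.degree b = 4) :
    1 / 4 ≤ G.transfer a b := by
  unfold transfer; split_ifs <;> grind

lemma half_le_transfer_of_degree_eq_four (ha : 7 ≤ G.degree a) (hb : G.degree b = 4) :
    1 / 2 ≤ G.transfer a b := by
  unfold transfer; split_ifs <;> grind

lemma chargeIn_nonneg (v : V) : 0 ≤ G.chargeIn v :=
  sum_nonneg fun _ _ ↦ transfer_nonneg _ _

lemma transfer_le_chargeIn {v e : V} (he : G.Adj v e) : G.transfer e v ≤ G.chargeIn v :=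
  single_le_sum (f := (G.transfer · v)) (fun _ _ ↦ transfer_nonneg _ _)
    ((G.mem_neighborFinset v e).mpr he)

lemma chargeOut_le_mul {v : V} {c : ℚ} (hc : ∀ u, G.Adj v u → G.transfer v u ≤ c) :
    G.chargeOut v ≤ G.degree v * c := by
  have := sum_le_card_nsmul _ _ c fun u hu ↦ hc u ((G.mem_neighborFinset v u).mp hu)
  rwa [card_neighborFinset_eq_degree, nsmul_eq_mul] at this

lemma chargeOut_le_add_of_forall_ne {v x : V} {c : ℚ} (hx : G.Adj v x)
    (hc : ∀ u, G.Adj v u → u ≠ x → G.transfer v u ≤ c) :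
    G.chargeOut v ≤ G.transfer v x + (G.degree v - 1) * c := by
  classical
  have hxN : x ∈ G.neighborFinset v := (G.mem_neighborFinset v x).mpr hx
  have hrest := sum_le_card_nsmul ((G.neighborFinset v).erase x) (G.transfer v) c fun u hu ↦
    hc u ((G.mem_neighborFinset v u).mp (mem_of_mem_erase hu)) (ne_of_mem_erase hu)
  rw [card_erase_of_mem hxN, card_neighborFinset_eq_degree, nsmul_eq_mul,
    Nat.cast_sub (G.degree_pos_iff_exists_adj v |>.mpr ⟨x, hx⟩), Nat.cast_one] at hrest
  rw [chargeOut, ← add_sum_erase _ _ hxN]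
  linarith

lemma mul_le_chargeIn_of_forall_ne {v x : V} {c : ℚ} (hx : G.Adj v x)
    (hc : ∀ u, G.Adj v u → u ≠ x → c ≤ G.transfer u v) :
    (G.degree v - 1) * c ≤ G.chargeIn v := by
  classical
  have hxN : x ∈ G.neighborFinset v := (G.mem_neighborFinset v x).mpr hx
  have hrest := card_nsmul_le_sum ((G.neighborFinset v).erase x) (G.transfer · v) c fun u hu ↦
    hc u ((G.mem_neighborFinset v u).mp (mem_of_mem_erase hu)) (ne_of_mem_erase hu)
  rw [card_erase_of_mem hxN, card_neighborFinset_eq_degree, nsmul_eq_mul,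
    Nat.cast_sub (G.degree_pos_iff_exists_adj v |>.mpr ⟨x, hx⟩), Nat.cast_one] at hrest
  rw [chargeIn, ← add_sum_erase _ _ hxN]
  linarith [transfer_nonneg (G := G) x v]

lemma exists_chargeOut_eq_add {v : V} {s : Finset V} (hs : ∀ u ∈ s, G.Adj v u)
    (hcard : #s + 1 = G.degree v) :
    ∃ e, G.Adj v e ∧ e ∉ s ∧ G.chargeOut v = G.transfer v e + ∑ u ∈ s, G.transfer v u := by
  classical
  obtain ⟨e, he, hN⟩ := exists_eq_insert_iff.mpr ⟨fun u hu ↦ (G.mem_neighborFinset v u).mpr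
    (hs u hu), hcard.trans (G.card_neighborFinset_eq_degree v).symm⟩
  refine ⟨e, (G.mem_neighborFinset v e).mp (hN ▸ mem_insert_self e s), he, ?_⟩
  rw [chargeOut, ← hN, sum_insert he]

lemma chargeOut_le_of_degree_le_five {v : V} (hv : G.degree v ≤ 5)
    (hH : ∀ u, G.Adj v u → ¬ G.IsHeavy u) :
    G.chargeOut v ≤ #{u ∈ G.neighborFinset v | G.degree u = 2} / 2 +
      #{u ∈ G.neighborFinset v | G.degree u = 3} / 4 := by
  calc G.chargeOut v
      ≤ ∑ u ∈ G.neighborFinset v,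
          ((if G.degree u = 2 then 1 / 2 else 0) + (if G.degree u = 3 then 1 / 4 else 0)) :=
        sum_le_sum fun u hu ↦
          transfer_le_of_degree_le_five hv (hH u ((G.mem_neighborFinset v u).mp hu))
    _ = _ := by
        rw [sum_add_distrib, ← sum_filter, ← sum_filter, sum_const, sum_const, nsmul_eq_mul,
          nsmul_eq_mul]
        ring

lemma card_degree_eq_two_add_card_degree_eq_three_le (v : V) :
    #{u ∈ G.neighborFinset v | G.degree u = 2} + #{u ∈ G.neighborFinset v | G.degree u = 3}
      ≤ G.degree v := by
  classical
  rw [← card_union_of_disjoint (disjoint_filter.mpr fun _ _ h ↦ by omega), ← filter_or,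
    ← card_neighborFinset_eq_degree]
  exact card_filter_le _ _

end Transfer

lemma sum_sum_neighborFinset_comm {V M : Type*} [Fintype V] [AddCommMonoid M]
    (G : SimpleGraph V) [DecidableRel G.Adj] (f : V → V → M) :
    ∑ v, ∑ u ∈ G.neighborFinset v, f v u = ∑ v, ∑ u ∈ G.neighborFinset v, f u v := by
  simp only [neighborFinset_eq_filter, sum_filter]
  rw [sum_comm]
  simp only [G.adj_comm]

section Configurations

variable {V : Type*} [Fintype V] (G : SimpleGraph V) [DecidableRel G.Adj]

structure AvoidsConfigurations : Prop where
  two_le_degree : ∀ v, 2 ≤ G.degree v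
  no_triangle_2_2 : ∀ ⦃a b c⦄, G.Adj a b → G.Adj b c → G.Adj a c → G.degree a = 2 →
    G.degree b ≠ 2
  no_path_2_3_3 : ∀ ⦃v₁ v₂ v₃⦄, G.Adj v₁ v₂ → G.Adj v₂ v₃ → v₁ ≠ v₃ → G.degree v₁ = 2 →
    G.degree v₂ ≤ 3 → 3 < G.degree v₃
  no_path_2_2_x_2 : ∀ ⦃v₁ v₂ v₃ v₄⦄, G.Adj v₁ v₂ → G.Adj v₂ v₃ → G.Adj v₃ v₄ →
    v₁ ≠ v₃ → v₁ ≠ v₄ → v₂ ≠ v₄ → G.degree v₁ = 2 → G.degree v₂ = 2 → G.degree v₄ ≠ 2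
  no_path_2_2_4_3 : ∀ ⦃v₁ v₂ v₃ v₄⦄, G.Adj v₁ v₂ → G.Adj v₂ v₃ → G.Adj v₃ v₄ →
    v₁ ≠ v₃ → v₁ ≠ v₄ → v₂ ≠ v₄ → G.degree v₁ = 2 → G.degree v₂ = 2 → G.degree v₃ = 4 →
    G.degree v₄ ≠ 3
  no_star_2_2_2_6 : ∀ ⦃w a b c d⦄, G.Adj w a → G.Adj w b → G.Adj w c → G.Adj w d →
    a ≠ b → a ≠ c → a ≠ d → b ≠ c → b ≠ d → c ≠ d →
    G.degree w = 4 → G.degree a = 2 → G.degree b = 2 → G.degree c = 2 → 6 < G.degree d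
  no_star_2_2_3_5 : ∀ ⦃w a b c d⦄, G.Adj w a → G.Adj w b → G.Adj w c → G.Adj w d →
    a ≠ b → a ≠ c → a ≠ d → b ≠ c → b ≠ d → c ≠ d →
    G.degree w = 4 → G.degree a = 2 → G.degree b = 2 → G.degree c = 3 → 5 < G.degree d
  no_star_2_3_3_3 : ∀ ⦃w a b c d⦄, G.Adj w a → G.Adj w b → G.Adj w c → G.Adj w d →
    a ≠ b → a ≠ c → a ≠ d → b ≠ c → b ≠ d → c ≠ d →
    G.degree w = 4 → G.degree a = 2 → G.degree b = 3 → G.degree c = 3 → G.degree d ≠ 3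
  no_star_2_2_2_2_2 : ∀ ⦃w a b c d e⦄, G.Adj w a → G.Adj w b → G.Adj w c → G.Adj w d →
    G.Adj w e → a ≠ b → a ≠ c → a ≠ d → a ≠ e → b ≠ c → b ≠ d → b ≠ e → c ≠ d → c ≠ e →
    d ≠ e → G.degree w = 5 → G.degree a = 2 → G.degree b = 2 → G.degree c = 2 →
    G.degree d = 2 → G.degree e ≠ 2
  no_star_2_2_2_2_3 : ∀ ⦃w a b c d e⦄, G.Adj w a → G.Adj w b → G.Adj w c → G.Adj w d →
    G.Adj w e → a ≠ b → a ≠ c → a ≠ d → a ≠ e → b ≠ c → b ≠ d → b ≠ e → c ≠ d → c ≠ e →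
    d ≠ e → G.degree w = 5 → G.degree a = 2 → G.degree b = 2 → G.degree c = 2 →
    G.degree d = 2 → G.degree e ≠ 3

namespace AvoidsConfigurations

variable {G} {v x z : V}

theorem three_le_degree_of_adj_heavy (hG : G.AvoidsConfigurations) (hv : G.degree v ≠ 2)
    (hx : G.Adj v x) (hxH : G.IsHeavy x) (hz : G.Adj v z) (hzx : z ≠ x) : 3 ≤ G.degree z := by
  obtain ⟨hx2, u, hxu, hu2⟩ := hxH
  have huv : u ≠ v := by rintro rfl; exact hv hu2
  have huz : u ≠ z := by
    rintro rfl
    exact hG.no_triangle_2_2 hxu.symm hx.symm hz.symm hu2 hx2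
  have := hG.no_path_2_2_x_2 hxu.symm hx.symm hz huv huz hzx.symm hu2 hx2
  have := hG.two_le_degree z
  omega

theorem four_le_degree_of_adj_heavy (hG : G.AvoidsConfigurations) (hv : G.degree v = 4)
    (hx : G.Adj v x) (hxH : G.IsHeavy x) (hz : G.Adj v z) (hzx : z ≠ x) : 4 ≤ G.degree z := by
  have h3 := hG.three_le_degree_of_adj_heavy (by omega) hx hxH hz hzx
  obtain ⟨hx2, u, hxu, hu2⟩ := hxH
  have := hG.no_path_2_2_4_3 hxu.symm hx.symm hz (by rintro rfl; omega) (by rintro rfl; omega)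
    hzx.symm hu2 hx2 hv
  omega

theorem card_degree_eq_three_le_two (hG : G.AvoidsConfigurations) {a : V} (hv : G.degree v = 4)
    (ha : G.Adj v a) (ha2 : G.degree a = 2) : #{u ∈ G.neighborFinset v | G.degree u = 3} ≤ 2 := by
  by_contra! hT
  obtain ⟨b, c, d, hb, hc, hd, hbc, hbd, hcd⟩ := two_lt_card_iff.mp hT
  simp only [mem_filter, mem_neighborFinset] at hb hc hd
  exact hG.no_star_2_3_3_3 ha hb.1 hc.1 hd.1 (by rintro rfl; omega) (by rintro rfl; omega)
    (by rintro rfl; omega) hbc hbd hcd hv ha2 hb.2 hc.2 hd.2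

theorem one_le_chargeIn_of_degree_eq_two (hG : G.AvoidsConfigurations) (hv : G.degree v = 2) :
    1 ≤ G.chargeIn v := by
  classical
  obtain ⟨x, y, hxy, hN⟩ := card_eq_two.mp ((G.card_neighborFinset_eq_degree v).trans hv)
  have hx : G.Adj v x := (G.mem_neighborFinset v x).mp (by simp [hN])
  have hy : G.Adj v y := (G.mem_neighborFinset v y).mp (by simp [hN])
  have heavy {x y : V} (hx : G.Adj v x) (hy : G.Adj v y) (hxy : x ≠ y) (hx2 : G.degree x = 2) :
      G.transfer y v = 1 :=
    transfer_eq_one (hG.no_path_2_3_3 hx.symm hy hxy hx2 (by omega)) ⟨hv, x, hx, hx2⟩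
  rw [chargeIn, hN, sum_pair hxy]
  have := transfer_nonneg (G := G) x v
  have := transfer_nonneg (G := G) y v
  by_cases hx2 : G.degree x = 2
  · linarith [heavy hx hy hxy hx2]
  by_cases hy2 : G.degree y = 2
  · linarith [heavy hy hx hxy.symm hy2]
  have := half_le_transfer_of_degree_eq_two (by have := hG.two_le_degree x; omega) hv (a := x)
  have := half_le_transfer_of_degree_eq_two (by have := hG.two_le_degree y; omega) hv (a := y)
  linarith

theorem chargeOut_le_chargeIn_of_degree_eq_three (hG : G.AvoidsConfigurations)
    (hv : G.degree v = 3) : G.chargeOut v ≤ G.chargeIn v := by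
  by_cases hw : ∃ w, G.Adj v w ∧ G.degree w = 2
  · obtain ⟨w, hw, hw2⟩ := hw
    have hbig (u : V) (hu : G.Adj v u) (huw : u ≠ w) : 4 ≤ G.degree u :=
      hG.no_path_2_3_3 hw.symm hu huw.symm hw2 (by omega)
    have hout := chargeOut_le_add_of_forall_ne (c := 0) hw fun u hu huw ↦
      (transfer_eq_zero_of_degree_eq_three hv (by have := hbig u hu huw; omega)).le
    have hin := mul_le_chargeIn_of_forall_ne (c := 1 / 4) hw fun u hu huw ↦
      quarter_le_transfer_of_degree_eq_three (hbig u hu huw) hv ⟨w, hw, hw2⟩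
    rw [transfer_eq_half_of_degree_eq_three hv hw2, hv] at hout
    rw [hv] at hin
    linarith
  · push Not at hw
    have : G.chargeOut v = 0 := sum_eq_zero fun u hu ↦
      transfer_eq_zero_of_degree_eq_three hv (hw u ((G.mem_neighborFinset v u).mp hu))
    rw [this]
    exact chargeIn_nonneg v

theorem chargeOut_le_of_star_2_2_2 (hG : G.AvoidsConfigurations) {a b c : V}
    (hv : G.degree v = 4) (ha : G.Adj v a) (hb : G.Adj v b) (hc : G.Adj v c)
    (hab : a ≠ b) (hac : a ≠ c) (hbc : b ≠ c)
    (ha2 : G.degree a = 2) (hb2 : G.degree b = 2) (hc2 : G.degree c = 2)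
    (hH : ∀ u, G.Adj v u → ¬ G.IsHeavy u) : G.chargeOut v ≤ 1 + G.chargeIn v := by
  classical
  have habc : #{a, b, c} = 3 := card_eq_three.mpr ⟨a, b, c, hab, hac, hbc, rfl⟩
  obtain ⟨e, he, heabc, hout⟩ :=
    exists_chargeOut_eq_add (G := G) (v := v) (s := {a, b, c}) (by simp [ha, hb, hc]) (by omega)
  simp only [mem_insert, mem_singleton, not_or] at heabc
  obtain ⟨hea, heb, hec⟩ := heabc
  have he7 : 7 ≤ G.degree e := hG.no_star_2_2_2_6 ha hb hc he hab hac (Ne.symm hea) hbc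
    (Ne.symm heb) (Ne.symm hec) hv ha2 hb2 hc2
  rw [hout, transfer_eq_zero_of_four_le (by omega) (by omega),
    sum_insert (by simp [hab, hac]), sum_insert (by simp [hbc]), sum_singleton]
  linarith [transfer_le_half (a := v) (hH a ha), transfer_le_half (a := v) (hH b hb),
    transfer_le_half (a := v) (hH c hc), half_le_transfer_of_degree_eq_four he7 hv,
    transfer_le_chargeIn he]

theorem chargeOut_le_of_star_2_2_3 (hG : G.AvoidsConfigurations) {a b c : V}
    (hv : G.degree v = 4) (ha : G.Adj v a) (hb : G.Adj v b) (hc : G.Adj v c) (hab : a ≠ b)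
    (ha2 : G.degree a = 2) (hb2 : G.degree b = 2) (hc3 : G.degree c = 3)
    (hH : ∀ u, G.Adj v u → ¬ G.IsHeavy u) : G.chargeOut v ≤ 1 + G.chargeIn v := by
  classical
  have hac : a ≠ c := by rintro rfl; omega
  have hbc : b ≠ c := by rintro rfl; omega
  have habc : #{a, b, c} = 3 := card_eq_three.mpr ⟨a, b, c, hab, hac, hbc, rfl⟩
  obtain ⟨e, he, heabc, hout⟩ :=
    exists_chargeOut_eq_add (G := G) (v := v) (s := {a, b, c}) (by simp [ha, hb, hc]) (by omega)
  simp only [mem_insert, mem_singleton, not_or] at heabc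
  obtain ⟨hea, heb, hec⟩ := heabc
  have he6 : 6 ≤ G.degree e := hG.no_star_2_2_3_5 ha hb hc he hab hac (Ne.symm hea) hbc
    (Ne.symm heb) (Ne.symm hec) hv ha2 hb2 hc3
  rw [hout, transfer_eq_zero_of_four_le (by omega) (by omega),
    sum_insert (by simp [hab, hac]), sum_insert (by simp [hbc]), sum_singleton]
  linarith [transfer_le_half (a := v) (hH a ha), transfer_le_half (a := v) (hH b hb),
    transfer_le_quarter (G := G) (a := v) (b := c) (by omega) (by omega),
    quarter_le_transfer_of_degree_eq_four he6 hv, transfer_le_chargeIn he]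

theorem chargeOut_le_of_degree_eq_four (hG : G.AvoidsConfigurations) (hv : G.degree v = 4) :
    G.chargeOut v ≤ 1 + G.chargeIn v := by
  have hin := chargeIn_nonneg (G := G) v
  by_cases hH : ∃ x, G.Adj v x ∧ G.IsHeavy x
  · obtain ⟨x, hx, hxH⟩ := hH
    have := chargeOut_le_add_of_forall_ne (c := 0) hx fun u hu hux ↦
      (transfer_eq_zero_of_four_le (by omega)
        (hG.four_le_degree_of_adj_heavy hv hx hxH hu hux)).le
    linarith [transfer_le_one (G := G) v x]
  push Not at hH
  set A := {u ∈ G.neighborFinset v | G.degree u = 2}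
  set T := {u ∈ G.neighborFinset v | G.degree u = 3}
  have memA {u : V} (hu : u ∈ A) : G.Adj v u ∧ G.degree u = 2 := by simpa [A] using hu
  have memT {u : V} (hu : u ∈ T) : G.Adj v u ∧ G.degree u = 3 := by simpa [T] using hu
  by_cases hA3 : 2 < #A
  · obtain ⟨a, b, c, ha, hb, hc, hab, hac, hbc⟩ := two_lt_card_iff.mp hA3
    exact hG.chargeOut_le_of_star_2_2_2 hv (memA ha).1 (memA hb).1 (memA hc).1 hab hac hbc
      (memA ha).2 (memA hb).2 (memA hc).2 hH
  by_cases hAT : 1 < #A ∧ 0 < #T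
  · obtain ⟨a, ha, b, hb, hab⟩ := one_lt_card.mp hAT.1
    obtain ⟨c, hc⟩ := card_pos.mp hAT.2
    exact hG.chargeOut_le_of_star_2_2_3 hv (memA ha).1 (memA hb).1 (memT hc).1 hab
      (memA ha).2 (memA hb).2 (memT hc).2 hH
  have hT : 0 < #A → #T ≤ 2 := fun hA ↦
    let ⟨_, ha⟩ := card_pos.mp hA
    hG.card_degree_eq_three_le_two hv (memA ha).1 (memA ha).2
  have hcard : #A + #T ≤ 4 := hv ▸ card_degree_eq_two_add_card_degree_eq_three_le v
  have : ((2 * #A + #T : ℕ) : ℚ) ≤ 4 := by exact_mod_cast (by omega : 2 * #A + #T ≤ 4)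
  push_cast at this
  linarith [chargeOut_le_of_degree_le_five (by omega) hH]

theorem chargeOut_le_two_of_degree_eq_five (hG : G.AvoidsConfigurations) (hv : G.degree v = 5)
    (hH : ∀ u, G.Adj v u → ¬ G.IsHeavy u) : G.chargeOut v ≤ 2 := by
  classical
  set A := {u ∈ G.neighborFinset v | G.degree u = 2}
  set T := {u ∈ G.neighborFinset v | G.degree u = 3}
  have memA {u : V} (hu : u ∈ A) : G.Adj v u ∧ G.degree u = 2 := by simpa [A] using hu
  by_cases hA4 : 3 < #A
  · obtain ⟨a, b, c, d, ha, hb, hc, hd, hab, hac, had, hbc, hbd, hcd⟩ := three_lt_card_iff.mp hA4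
    have hs : #{a, b, c, d} = 4 := card_eq_four.mpr ⟨a, b, c, d, hab, hac, had, hbc, hbd, hcd, rfl⟩
    have hadj : ∀ u ∈ ({a, b, c, d} : Finset V), G.Adj v u := by
      simp [(memA ha).1, (memA hb).1, (memA hc).1, (memA hd).1]
    obtain ⟨e, he, heabcd, hout⟩ := exists_chargeOut_eq_add hadj (by omega)
    simp only [mem_insert, mem_singleton, not_or] at heabcd
    obtain ⟨hea, heb, hec, hed⟩ := heabcd
    have h2 := hG.no_star_2_2_2_2_2 (memA ha).1 (memA hb).1 (memA hc).1 (memA hd).1 he hab hac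
      had (Ne.symm hea) hbc hbd (Ne.symm heb) hcd (Ne.symm hec) (Ne.symm hed) hv (memA ha).2
      (memA hb).2 (memA hc).2 (memA hd).2
    have h3 := hG.no_star_2_2_2_2_3 (memA ha).1 (memA hb).1 (memA hc).1 (memA hd).1 he hab hac
      had (Ne.symm hea) hbc hbd (Ne.symm heb) hcd (Ne.symm hec) (Ne.symm hed) hv (memA ha).2
      (memA hb).2 (memA hc).2 (memA hd).2
    have := hG.two_le_degree e
    have hsum := sum_le_card_nsmul _ (G.transfer v) (1 / 2) fun u hu ↦
      transfer_le_half (hH u (hadj u hu))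
    rw [hs, nsmul_eq_mul] at hsum
    rw [hout, transfer_eq_zero_of_four_le (by omega) (by omega)]
    linarith
  have hcard : #A + #T ≤ 5 := hv ▸ card_degree_eq_two_add_card_degree_eq_three_le v
  have : ((2 * #A + #T : ℕ) : ℚ) ≤ 8 := by exact_mod_cast (by omega : 2 * #A + #T ≤ 8)
  push_cast at this
  linarith [chargeOut_le_of_degree_le_five (by omega) hH]

theorem chargeOut_le_of_five_le_degree (hG : G.AvoidsConfigurations) (hv : 5 ≤ G.degree v) :
    G.chargeOut v ≤ G.degree v - 3 + G.chargeIn v := by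
  have hin := chargeIn_nonneg (G := G) v
  by_cases hH : ∃ x, G.Adj v x ∧ G.IsHeavy x
  · obtain ⟨x, hx, hxH⟩ := hH
    have h3 (u : V) (hu : G.Adj v u) (hux : u ≠ x) : 3 ≤ G.degree u :=
      hG.three_le_degree_of_adj_heavy (by omega) hx hxH hu hux
    have := transfer_le_one (G := G) v x
    rcases le_or_gt (G.degree v) 6 with h6 | h7
    · have := chargeOut_le_add_of_forall_ne (c := 1 / 4) hx fun u hu hux ↦
        transfer_le_quarter h6 (h3 u hu hux)
      have : (5 : ℚ) ≤ G.degree v := by exact_mod_cast hv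
      linarith
    · have := chargeOut_le_add_of_forall_ne (c := 1 / 2) hx fun u hu hux ↦
        transfer_le_half fun hH ↦ by have := h3 u hu hux; have := hH.1; omega
      have : (7 : ℚ) ≤ G.degree v := by exact_mod_cast h7
      linarith
  push Not at hH
  rcases hv.eq_or_lt with h5 | h6
  · have : (G.degree v : ℚ) = 5 := by exact_mod_cast h5.symm
    linarith [hG.chargeOut_le_two_of_degree_eq_five h5.symm hH]
  · have := chargeOut_le_mul (c := 1 / 2) fun u hu ↦ transfer_le_half (hH u hu)
    have : (6 : ℚ) ≤ G.degree v := by exact_mod_cast h6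
    linarith

theorem chargeOut_add_three_le (hG : G.AvoidsConfigurations) (v : V) :
    G.chargeOut v + 3 ≤ G.degree v + G.chargeIn v := by
  have := hG.two_le_degree v
  obtain hv | hv | hv | hv : G.degree v = 2 ∨ G.degree v = 3 ∨ G.degree v = 4 ∨ 5 ≤ G.degree v := by
    omega
  · have : G.chargeOut v = 0 := sum_eq_zero fun _ _ ↦ transfer_eq_zero_of_degree_eq_two hv
    push_cast [this, hv]
    linarith [hG.one_le_chargeIn_of_degree_eq_two hv]
  · push_cast [hv]
    linarith [hG.chargeOut_le_chargeIn_of_degree_eq_three hv]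
  · push_cast [hv]
    linarith [hG.chargeOut_le_of_degree_eq_four hv]
  · linarith [hG.chargeOut_le_of_five_le_degree hv]

theorem three_mul_card_le (hG : G.AvoidsConfigurations) :
    3 * Fintype.card V ≤ 2 * #G.edgeFinset := by
  have hsum := sum_le_sum fun v (_ : v ∈ univ) ↦ hG.chargeOut_add_three_le v
  have hcomm : ∑ v, G.chargeOut v = ∑ v, G.chargeIn v := sum_sum_neighborFinset_comm G _
  have hdeg : ∑ v, (G.degree v : ℚ) = 2 * #G.edgeFinset := by
    exact_mod_cast G.sum_degrees_eq_twice_card_edges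
  rw [sum_add_distrib, sum_add_distrib, hcomm, hdeg, sum_const, card_univ, nsmul_eq_mul] at hsum
  exact_mod_cast (by linarith : (3 * Fintype.card V : ℚ) ≤ 2 * #G.edgeFinset)

end AvoidsConfigurations

end Configurations

end SimpleGraph

open SimpleGraph

theorem stmt_6_general {V : Type} [Fintype V] (G : SimpleGraph V)
    [DecidableRel G.Adj]
    (hδ : (∀ v, 2 ≤ G.degree v) ∧ (∃ v, G.degree v = 2))
    (havg : (2 * G.edgeFinset.card : ℚ) / Fintype.card V < 3)
    (htri : ¬ ∃ a b c : V, G.Adj a b ∧ G.Adj b c ∧ G.Adj a c ∧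
      G.degree a = 2 ∧ G.degree b = 2) :
    -- a (2, 3⁻, 3⁻)-path
    (∃ v₁ v₂ v₃ : V, G.Adj v₁ v₂ ∧ G.Adj v₂ v₃ ∧ v₁ ≠ v₃ ∧
        G.degree v₁ = 2 ∧ G.degree v₂ ≤ 3 ∧ G.degree v₃ ≤ 3) ∨
    -- a (2, 2, ∞, 2)-path
    (∃ v₁ v₂ v₃ v₄ : V, G.Adj v₁ v₂ ∧ G.Adj v₂ v₃ ∧ G.Adj v₃ v₄ ∧
        v₁ ≠ v₃ ∧ v₁ ≠ v₄ ∧ v₂ ≠ v₄ ∧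
        G.degree v₁ = 2 ∧ G.degree v₂ = 2 ∧ G.degree v₄ = 2) ∨
    -- a (2, 2, 4, 3)-path
    (∃ v₁ v₂ v₃ v₄ : V, G.Adj v₁ v₂ ∧ G.Adj v₂ v₃ ∧ G.Adj v₃ v₄ ∧
        v₁ ≠ v₃ ∧ v₁ ≠ v₄ ∧ v₂ ≠ v₄ ∧
        G.degree v₁ = 2 ∧ G.degree v₂ = 2 ∧ G.degree v₃ = 4 ∧ G.degree v₄ = 3) ∨
    -- a (4; 2, 2, 2, 6⁻)-star
    (∃ w a b c d : V, G.Adj w a ∧ G.Adj w b ∧ G.Adj w c ∧ G.Adj w d ∧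
        a ≠ b ∧ a ≠ c ∧ a ≠ d ∧ b ≠ c ∧ b ≠ d ∧ c ≠ d ∧
        G.degree w = 4 ∧ G.degree a = 2 ∧ G.degree b = 2 ∧ G.degree c = 2 ∧
        G.degree d ≤ 6) ∨
    -- a (4; 2, 2, 3, 5⁻)-star
    (∃ w a b c d : V, G.Adj w a ∧ G.Adj w b ∧ G.Adj w c ∧ G.Adj w d ∧
        a ≠ b ∧ a ≠ c ∧ a ≠ d ∧ b ≠ c ∧ b ≠ d ∧ c ≠ d ∧
        G.degree w = 4 ∧ G.degree a = 2 ∧ G.degree b = 2 ∧ G.degree c = 3 ∧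
        G.degree d ≤ 5) ∨
    -- a (4; 2, 3, 3, 3)-star
    (∃ w a b c d : V, G.Adj w a ∧ G.Adj w b ∧ G.Adj w c ∧ G.Adj w d ∧
        a ≠ b ∧ a ≠ c ∧ a ≠ d ∧ b ≠ c ∧ b ≠ d ∧ c ≠ d ∧
        G.degree w = 4 ∧ G.degree a = 2 ∧ G.degree b = 3 ∧ G.degree c = 3 ∧
        G.degree d = 3) ∨
    -- a (5; 2, 2, 2, 2, 2)-star
    (∃ w a b c d e : V, G.Adj w a ∧ G.Adj w b ∧ G.Adj w c ∧ G.Adj w d ∧ G.Adj w e ∧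
        a ≠ b ∧ a ≠ c ∧ a ≠ d ∧ a ≠ e ∧ b ≠ c ∧ b ≠ d ∧ b ≠ e ∧ c ≠ d ∧ c ≠ e ∧ d ≠ e ∧
        G.degree w = 5 ∧ G.degree a = 2 ∧ G.degree b = 2 ∧ G.degree c = 2 ∧
        G.degree d = 2 ∧ G.degree e = 2) ∨
    -- a (5; 2, 2, 2, 2, 3)-star
    (∃ w a b c d e : V, G.Adj w a ∧ G.Adj w b ∧ G.Adj w c ∧ G.Adj w d ∧ G.Adj w e ∧
        a ≠ b ∧ a ≠ c ∧ a ≠ d ∧ a ≠ e ∧ b ≠ c ∧ b ≠ d ∧ b ≠ e ∧ c ≠ d ∧ c ≠ e ∧ d ≠ e ∧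
        G.degree w = 5 ∧ G.degree a = 2 ∧ G.degree b = 2 ∧ G.degree c = 2 ∧
        G.degree d = 2 ∧ G.degree e = 3) := by
  obtain ⟨hδ, v₀, -⟩ := hδ
  by_contra! hcon
  obtain ⟨h₁, h₂, h₃, h₄, h₅, h₆, h₇, h₈⟩ := hcon
  have hG : G.AvoidsConfigurations :=
    ⟨hδ, fun a b c hab hbc hac ha hb ↦ htri ⟨a, b, c, hab, hbc, hac, ha, hb⟩,
      h₁, h₂, h₃, h₄, h₅, h₆, h₇, h₈⟩
  have hV : (0 : ℚ) < Fintype.card V := by exact_mod_cast Fintype.card_pos_iff.mpr ⟨v₀⟩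
  have : (3 * Fintype.card V : ℚ) ≤ 2 * #G.edgeFinset := by exact_mod_cast hG.three_mul_card_le
  rw [div_lt_iff₀ hV] at havg
  linarith

theorem stmt_6 {V : Type} [Fintype V] [DecidableEq V] (G : SimpleGraph V)
    [DecidableRel G.Adj]
    (hδ : (∀ v, 2 ≤ G.degree v) ∧ (∃ v, G.degree v = 2))
    (havg : (2 * G.edgeFinset.card : ℚ) / Fintype.card V < 3)
    (htri : ¬ ∃ a b c : V, G.Adj a b ∧ G.Adj b c ∧ G.Adj a c ∧
      G.degree a = 2 ∧ G.degree b = 2) :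
    -- a (2, 3⁻, 3⁻)-path
    (∃ v₁ v₂ v₃ : V, G.Adj v₁ v₂ ∧ G.Adj v₂ v₃ ∧ v₁ ≠ v₃ ∧
        G.degree v₁ = 2 ∧ G.degree v₂ ≤ 3 ∧ G.degree v₃ ≤ 3) ∨
    -- a (2, 2, ∞, 2)-path
    (∃ v₁ v₂ v₃ v₄ : V, G.Adj v₁ v₂ ∧ G.Adj v₂ v₃ ∧ G.Adj v₃ v₄ ∧
        v₁ ≠ v₃ ∧ v₁ ≠ v₄ ∧ v₂ ≠ v₄ ∧
        G.degree v₁ = 2 ∧ G.degree v₂ = 2 ∧ G.degree v₄ = 2) ∨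
    -- a (2, 2, 4, 3)-path
    (∃ v₁ v₂ v₃ v₄ : V, G.Adj v₁ v₂ ∧ G.Adj v₂ v₃ ∧ G.Adj v₃ v₄ ∧
        v₁ ≠ v₃ ∧ v₁ ≠ v₄ ∧ v₂ ≠ v₄ ∧
        G.degree v₁ = 2 ∧ G.degree v₂ = 2 ∧ G.degree v₃ = 4 ∧ G.degree v₄ = 3) ∨
    -- a (4; 2, 2, 2, 6⁻)-star
    (∃ w a b c d : V, G.Adj w a ∧ G.Adj w b ∧ G.Adj w c ∧ G.Adj w d ∧
        a ≠ b ∧ a ≠ c ∧ a ≠ d ∧ b ≠ c ∧ b ≠ d ∧ c ≠ d ∧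
        G.degree w = 4 ∧ G.degree a = 2 ∧ G.degree b = 2 ∧ G.degree c = 2 ∧
        G.degree d ≤ 6) ∨
    -- a (4; 2, 2, 3, 5⁻)-star
    (∃ w a b c d : V, G.Adj w a ∧ G.Adj w b ∧ G.Adj w c ∧ G.Adj w d ∧
        a ≠ b ∧ a ≠ c ∧ a ≠ d ∧ b ≠ c ∧ b ≠ d ∧ c ≠ d ∧
        G.degree w = 4 ∧ G.degree a = 2 ∧ G.degree b = 2 ∧ G.degree c = 3 ∧
        G.degree d ≤ 5) ∨
    -- a (4; 2, 3, 3, 3)-star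
    (∃ w a b c d : V, G.Adj w a ∧ G.Adj w b ∧ G.Adj w c ∧ G.Adj w d ∧
        a ≠ b ∧ a ≠ c ∧ a ≠ d ∧ b ≠ c ∧ b ≠ d ∧ c ≠ d ∧
        G.degree w = 4 ∧ G.degree a = 2 ∧ G.degree b = 3 ∧ G.degree c = 3 ∧
        G.degree d = 3) ∨
    -- a (5; 2, 2, 2, 2, 2)-star
    (∃ w a b c d e : V, G.Adj w a ∧ G.Adj w b ∧ G.Adj w c ∧ G.Adj w d ∧ G.Adj w e ∧
        a ≠ b ∧ a ≠ c ∧ a ≠ d ∧ a ≠ e ∧ b ≠ c ∧ b ≠ d ∧ b ≠ e ∧ c ≠ d ∧ c ≠ e ∧ d ≠ e ∧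
        G.degree w = 5 ∧ G.degree a = 2 ∧ G.degree b = 2 ∧ G.degree c = 2 ∧
        G.degree d = 2 ∧ G.degree e = 2) ∨
    -- a (5; 2, 2, 2, 2, 3)-star
    (∃ w a b c d e : V, G.Adj w a ∧ G.Adj w b ∧ G.Adj w c ∧ G.Adj w d ∧ G.Adj w e ∧
        a ≠ b ∧ a ≠ c ∧ a ≠ d ∧ a ≠ e ∧ b ≠ c ∧ b ≠ d ∧ b ≠ e ∧ c ≠ d ∧ c ≠ e ∧ d ≠ e ∧
        G.degree w = 5 ∧ G.degree a = 2 ∧ G.degree b = 2 ∧ G.degree c = 2 ∧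
        G.degree d = 2 ∧ G.degree e = 3) :=
  stmt_6_general G hδ havg htri
end

section
/- Let G be a finite simple graph with minimum degree exactly 2, average degree strictly less than 3, and no triangle with two degree-2 vertices. Then G contains at least one of: a (2, 3^-, 3^-)-path; a (2, 2, ∞, 2)-path; a (2, 2, 4, 3)-path; a (4; 2, 2, 2, 6^-)-star; a path with degrees (2, 4, 3, 2); a triangle whose vertices have degrees 2, 4, 3; a (5; 2, 2, 2, 2, 2)-star; or a (5; 2, 2, 2, 2, 3)-star. -/
open SimpleGraph Finset

variable {V : Type} [Fintype V] [DecidableEq V] (G : SimpleGraph V) [DecidableRel G.Adj]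

def paired (v : V) : Prop := G.degree v = 2 ∧ ∃ u ∈ G.neighborFinset v, G.degree u = 2
def solo (v : V) : Prop := G.degree v = 2 ∧ ¬ paired G v
def needy (v : V) : Prop := G.degree v = 3 ∧ ∃ u ∈ G.neighborFinset v, G.degree u = 2
def poor (v : V) : Prop := G.degree v = 4 ∧ 3 ≤ ((G.neighborFinset v).filter (fun u => G.degree u = 2)).card

instance : DecidablePred (paired G) := fun v => by unfold paired; infer_instance
instance : DecidablePred (solo G) := fun v => by unfold solo; infer_instance
instance : DecidablePred (needy G) := fun v => by unfold needy; infer_instance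
instance : DecidablePred (poor G) := fun v => by unfold poor; infer_instance

noncomputable def send (u v : V) : ℚ :=
  if G.Adj u v then
    if paired G v ∧ 4 ≤ G.degree u then 1
    else if solo G v ∧ 3 ≤ G.degree u then 1/2
    else if needy G v ∧ 4 ≤ G.degree u then 1/4
    else if poor G v ∧ 7 ≤ G.degree u then 1/2
    else 0
  else 0

lemma send_nonneg (u v : V) : 0 ≤ send G u v := by
  unfold send; split_ifs <;> norm_num

lemma send_le_one (u v : V) : send G u v ≤ 1 := by
  unfold send; split_ifs <;> norm_num

lemma send_of_not_adj {u v : V} (h : ¬ G.Adj u v) : send G u v = 0 := by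
  unfold send; rw [if_neg h]

set_option linter.unusedSectionVars false

-- C1 consequence
lemma L1 (hC1 : ¬ ∃ v₁ v₂ v₃ : V, G.Adj v₁ v₂ ∧ G.Adj v₂ v₃ ∧ v₁ ≠ v₃ ∧
        G.degree v₁ = 2 ∧ G.degree v₂ ≤ 3 ∧ G.degree v₃ ≤ 3)
    {x u w : V} (hx : G.degree x = 2) (hxu : G.Adj x u) (huw : G.Adj u w)
    (hne : x ≠ w) (hu : G.degree u ≤ 3) : 4 ≤ G.degree w := by
  by_contra h
  exact hC1 ⟨x, u, w, hxu, huw, hne, hx, hu, by omega⟩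

-- a degree-2 vertex has exactly two distinct neighbors
lemma nbrs2 {v : V} (hv : G.degree v = 2) :
    ∃ a b : V, a ≠ b ∧ G.neighborFinset v = {a, b} := by
  have h : (G.neighborFinset v).card = 2 := by rw [card_neighborFinset_eq_degree]; exact hv
  obtain ⟨a, b, hab, h⟩ := Finset.card_eq_two.mp h
  exact ⟨a, b, hab, h⟩

lemma nbrs3 {v : V} (hv : G.degree v = 3) :
    ∃ a b c : V, a ≠ b ∧ a ≠ c ∧ b ≠ c ∧ G.neighborFinset v = {a, b, c} := by
  have h : (G.neighborFinset v).card = 3 := by rw [card_neighborFinset_eq_degree]; exact hv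
  exact Finset.card_eq_three.mp h

-- C2 consequence: a vertex (of degree ≥ 3) with a paired neighbor has no other deg-2 neighbor
lemma L2 (htri : ¬ ∃ a b c : V, G.Adj a b ∧ G.Adj b c ∧ G.Adj a c ∧
      G.degree a = 2 ∧ G.degree b = 2)
    (hC2 : ¬ ∃ v₁ v₂ v₃ v₄ : V, G.Adj v₁ v₂ ∧ G.Adj v₂ v₃ ∧ G.Adj v₃ v₄ ∧
        v₁ ≠ v₃ ∧ v₁ ≠ v₄ ∧ v₂ ≠ v₄ ∧
        G.degree v₁ = 2 ∧ G.degree v₂ = 2 ∧ G.degree v₄ = 2)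
    {u v x : V} (hu : 3 ≤ G.degree u) (hv : paired G v) (huv : G.Adj u v)
    (hux : G.Adj u x) (hxv : x ≠ v) : G.degree x ≠ 2 := by
  intro hx2
  obtain ⟨hv2, p, hp, hp2⟩ := hv
  rw [mem_neighborFinset] at hp
  have hpu : p ≠ u := by intro h; rw [h] at hp2; omega
  have hpx : p ≠ x := by
    intro h
    exact htri ⟨v, p, u, hp, by rw [← h] at hux; exact hux.symm, huv.symm, hv2, hp2⟩
  exact hC2 ⟨p, v, u, x, hp.symm, huv.symm, hux, hpu, hpx, (Ne.symm hxv), hp2, hv2, hx2⟩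

-- C3 consequence: a degree-4 vertex with a paired neighbor has no degree-3 neighbor
lemma L3 (hC3 : ¬ ∃ v₁ v₂ v₃ v₄ : V, G.Adj v₁ v₂ ∧ G.Adj v₂ v₃ ∧ G.Adj v₃ v₄ ∧
        v₁ ≠ v₃ ∧ v₁ ≠ v₄ ∧ v₂ ≠ v₄ ∧
        G.degree v₁ = 2 ∧ G.degree v₂ = 2 ∧ G.degree v₃ = 4 ∧ G.degree v₄ = 3)
    {u v a : V} (hu : G.degree u = 4) (hv : paired G v) (huv : G.Adj u v)
    (hua : G.Adj u a) : G.degree a ≠ 3 := by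
  intro ha3
  obtain ⟨hv2, p, hp, hp2⟩ := hv
  rw [mem_neighborFinset] at hp
  have hpu : p ≠ u := by intro h; rw [h] at hp2; omega
  have hpa : p ≠ a := by intro h; rw [h] at hp2; omega
  have hva : v ≠ a := by intro h; rw [h] at hv2; omega
  exact hC3 ⟨p, v, u, a, hp.symm, huv.symm, hua, hpu, hpa, hva, hp2, hv2, hu, ha3⟩

-- C5/C6 consequence: a degree-4 vertex with a deg-2 neighbor has no needy neighbor
lemma L56 (hC5 : ¬ ∃ v₁ v₂ v₃ v₄ : V, G.Adj v₁ v₂ ∧ G.Adj v₂ v₃ ∧ G.Adj v₃ v₄ ∧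
        v₁ ≠ v₃ ∧ v₁ ≠ v₄ ∧ v₂ ≠ v₄ ∧
        G.degree v₁ = 2 ∧ G.degree v₂ = 4 ∧ G.degree v₃ = 3 ∧ G.degree v₄ = 2)
    (hC6 : ¬ ∃ a b c : V, G.Adj a b ∧ G.Adj b c ∧ G.Adj a c ∧
        G.degree a = 2 ∧ G.degree b = 4 ∧ G.degree c = 3)
    {u z a : V} (hu : G.degree u = 4) (huz : G.Adj u z) (hz2 : G.degree z = 2)
    (hua : G.Adj u a) : ¬ needy G a := by
  rintro ⟨ha3, w, hw, hw2⟩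
  rw [mem_neighborFinset] at hw
  have hza : z ≠ a := by intro h; rw [h] at hz2; omega
  have huw : u ≠ w := by intro h; rw [← h] at hw2; omega
  by_cases hzw : z = w
  · exact hC6 ⟨z, u, a, huz.symm, hua, by rw [hzw]; exact hw.symm, hz2, hu, ha3⟩
  · exact hC5 ⟨z, u, a, w, huz.symm, hua, hw, hza, hzw, huw, hz2, hu, ha3, hw2⟩

-- C4 consequence
lemma L4 (hC4 : ¬ ∃ w a b c d : V, G.Adj w a ∧ G.Adj w b ∧ G.Adj w c ∧ G.Adj w d ∧
        a ≠ b ∧ a ≠ c ∧ a ≠ d ∧ b ≠ c ∧ b ≠ d ∧ c ≠ d ∧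
        G.degree w = 4 ∧ G.degree a = 2 ∧ G.degree b = 2 ∧ G.degree c = 2 ∧
        G.degree d ≤ 6)
    {u : V} (hu : G.degree u = 4)
    (hs : 3 ≤ ((G.neighborFinset u).filter (fun w => G.degree w = 2)).card) :
    ∃ x, x ∈ G.neighborFinset u ∧ 7 ≤ G.degree x ∧
      ((G.neighborFinset u).filter (fun w => G.degree w = 2)).card = 3 := by
  set s := (G.neighborFinset u).filter (fun w => G.degree w = 2) with hsdef
  obtain ⟨t, hts, htc⟩ := Finset.exists_subset_card_eq hs
  obtain ⟨a, b, c, hab, hac, hbc, rfl⟩ := Finset.card_eq_three.mp htc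
  have hmem : ∀ y ∈ ({a, b, c} : Finset V), y ∈ G.neighborFinset u ∧ G.degree y = 2 := by
    intro y hy
    have := hts hy
    rw [hsdef, Finset.mem_filter] at this
    exact this
  have ha := hmem a (by simp)
  have hb := hmem b (by simp)
  have hc := hmem c (by simp)
  have hsub : ({a, b, c} : Finset V) ⊆ G.neighborFinset u := by
    intro y hy; exact (hmem y hy).1
  have hcard : (G.neighborFinset u \ {a, b, c}).card = 1 := by
    rw [Finset.card_sdiff_of_subset hsub, htc, card_neighborFinset_eq_degree, hu]
  obtain ⟨x, hx⟩ := Finset.card_eq_one.mp hcard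
  have hxmem : x ∈ G.neighborFinset u \ ({a, b, c} : Finset V) := by rw [hx]; simp
  rw [Finset.mem_sdiff] at hxmem
  obtain ⟨hxN, hxabc⟩ := hxmem
  simp only [Finset.mem_insert, Finset.mem_singleton, not_or] at hxabc
  obtain ⟨hxa, hxb, hxc⟩ := hxabc
  have hx7 : 7 ≤ G.degree x := by
    by_contra h
    exact hC4 ⟨u, a, b, c, x,
      (mem_neighborFinset _ _ _).mp ha.1, (mem_neighborFinset _ _ _).mp hb.1,
      (mem_neighborFinset _ _ _).mp hc.1, (mem_neighborFinset _ _ _).mp hxN,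
      hab, hac, (Ne.symm hxa), hbc, (Ne.symm hxb), (Ne.symm hxc),
      hu, ha.2, hb.2, hc.2, by omega⟩
  refine ⟨x, hxN, hx7, ?_⟩
  have hxns : x ∉ s := by rw [hsdef, Finset.mem_filter]; rintro ⟨-, h2⟩; omega
  have hsle : s ⊆ (G.neighborFinset u).erase x := by
    intro y hy
    rw [Finset.mem_erase]
    refine ⟨fun h => hxns (h ▸ hy), (Finset.mem_filter.mp hy).1⟩
  have := Finset.card_le_card hsle
  rw [Finset.card_erase_of_mem hxN, card_neighborFinset_eq_degree, hu] at this
  omega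

-- C7/C8 consequence
lemma L78 (hδ2 : ∀ v, 2 ≤ G.degree v)
    (hC7 : ¬ ∃ w a b c d e : V, G.Adj w a ∧ G.Adj w b ∧ G.Adj w c ∧ G.Adj w d ∧ G.Adj w e ∧
        a ≠ b ∧ a ≠ c ∧ a ≠ d ∧ a ≠ e ∧ b ≠ c ∧ b ≠ d ∧ b ≠ e ∧ c ≠ d ∧ c ≠ e ∧ d ≠ e ∧
        G.degree w = 5 ∧ G.degree a = 2 ∧ G.degree b = 2 ∧ G.degree c = 2 ∧
        G.degree d = 2 ∧ G.degree e = 2)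
    (hC8 : ¬ ∃ w a b c d e : V, G.Adj w a ∧ G.Adj w b ∧ G.Adj w c ∧ G.Adj w d ∧ G.Adj w e ∧
        a ≠ b ∧ a ≠ c ∧ a ≠ d ∧ a ≠ e ∧ b ≠ c ∧ b ≠ d ∧ b ≠ e ∧ c ≠ d ∧ c ≠ e ∧ d ≠ e ∧
        G.degree w = 5 ∧ G.degree a = 2 ∧ G.degree b = 2 ∧ G.degree c = 2 ∧
        G.degree d = 2 ∧ G.degree e = 3)
    {u : V} (hu : G.degree u = 5)
    (hs : 4 ≤ ((G.neighborFinset u).filter (fun w => G.degree w = 2)).card) :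
    ∃ x, x ∈ G.neighborFinset u ∧ 4 ≤ G.degree x ∧
      ((G.neighborFinset u).filter (fun w => G.degree w = 2)).card = 4 := by
  set s := (G.neighborFinset u).filter (fun w => G.degree w = 2) with hsdef
  obtain ⟨t, hts, htc⟩ := Finset.exists_subset_card_eq hs
  have htpos : t.Nonempty := by rw [← Finset.card_pos, htc]; omega
  obtain ⟨a, hat⟩ := htpos
  have herase : (t.erase a).card = 3 := by rw [Finset.card_erase_of_mem hat, htc]
  obtain ⟨b, c, d, hbc, hbd, hcd, hbcd⟩ := Finset.card_eq_three.mp herase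
  have hanot : a ∉ ({b, c, d} : Finset V) := by rw [← hbcd]; exact Finset.notMem_erase a t
  simp only [Finset.mem_insert, Finset.mem_singleton, not_or] at hanot
  obtain ⟨hab, hac, had⟩ := hanot
  have hteq : t = {a, b, c, d} := by
    rw [← Finset.insert_erase hat, hbcd]
  have hmem : ∀ y ∈ ({a, b, c, d} : Finset V), y ∈ G.neighborFinset u ∧ G.degree y = 2 := by
    intro y hy
    have := hts (hteq ▸ hy)
    rw [hsdef, Finset.mem_filter] at this
    exact this
  have ha := hmem a (by simp)
  have hb := hmem b (by simp)
  have hc := hmem c (by simp)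
  have hd := hmem d (by simp)
  have hsub : ({a, b, c, d} : Finset V) ⊆ G.neighborFinset u := fun y hy => (hmem y hy).1
  have htc4 : ({a, b, c, d} : Finset V).card = 4 := by rw [← hteq]; exact htc
  have hcard : (G.neighborFinset u \ {a, b, c, d}).card = 1 := by
    rw [Finset.card_sdiff_of_subset hsub, htc4, card_neighborFinset_eq_degree, hu]
  obtain ⟨x, hx⟩ := Finset.card_eq_one.mp hcard
  have hxmem : x ∈ G.neighborFinset u \ ({a, b, c, d} : Finset V) := by rw [hx]; simp
  rw [Finset.mem_sdiff] at hxmem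
  obtain ⟨hxN, hxabcd⟩ := hxmem
  simp only [Finset.mem_insert, Finset.mem_singleton, not_or] at hxabcd
  obtain ⟨hxa, hxb, hxc, hxd⟩ := hxabcd
  have hadja : G.Adj u a := (mem_neighborFinset _ _ _).mp ha.1
  have hadjb : G.Adj u b := (mem_neighborFinset _ _ _).mp hb.1
  have hadjc : G.Adj u c := (mem_neighborFinset _ _ _).mp hc.1
  have hadjd : G.Adj u d := (mem_neighborFinset _ _ _).mp hd.1
  have hadjx : G.Adj u x := (mem_neighborFinset _ _ _).mp hxN
  have hx4 : 4 ≤ G.degree x := by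
    have h2 := hδ2 x
    rcases Nat.lt_or_ge (G.degree x) 4 with h | h
    · exfalso
      have hdx : G.degree x = 2 ∨ G.degree x = 3 := by omega
      rcases hdx with hdx | hdx
      · exact hC7 ⟨u, a, b, c, d, x, hadja, hadjb, hadjc, hadjd, hadjx,
          hab, hac, had, (Ne.symm hxa), hbc, hbd, (Ne.symm hxb), hcd, (Ne.symm hxc),
          (Ne.symm hxd), hu, ha.2, hb.2, hc.2, hd.2, hdx⟩
      · exact hC8 ⟨u, a, b, c, d, x, hadja, hadjb, hadjc, hadjd, hadjx,
          hab, hac, had, (Ne.symm hxa), hbc, hbd, (Ne.symm hxb), hcd, (Ne.symm hxc),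
          (Ne.symm hxd), hu, ha.2, hb.2, hc.2, hd.2, hdx⟩
    · exact h
  refine ⟨x, hxN, hx4, ?_⟩
  have hxns : x ∉ s := by rw [hsdef, Finset.mem_filter]; rintro ⟨-, h2⟩; omega
  have hsle : s ⊆ (G.neighborFinset u).erase x := by
    intro y hy
    rw [Finset.mem_erase]
    exact ⟨fun h => hxns (h ▸ hy), (Finset.mem_filter.mp hy).1⟩
  have := Finset.card_le_card hsle
  rw [Finset.card_erase_of_mem hxN, card_neighborFinset_eq_degree, hu] at this
  omega

lemma send_paired {u v : V} (hadj : G.Adj u v) (hp : paired G v) (hdu : 4 ≤ G.degree u) :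
    send G u v = 1 := by
  unfold send; rw [if_pos hadj, if_pos ⟨hp, hdu⟩]

lemma send_solo {u v : V} (hadj : G.Adj u v) (hs : solo G v) (hdu : 3 ≤ G.degree u) :
    send G u v = 1/2 := by
  unfold send
  rw [if_pos hadj, if_neg (by rintro ⟨hp, -⟩; exact hs.2 hp), if_pos ⟨hs, hdu⟩]

lemma send_needy {u v : V} (hadj : G.Adj u v) (hn : needy G v) (hdu : 4 ≤ G.degree u) :
    send G u v = 1/4 := by
  unfold send
  rw [if_pos hadj, if_neg (by rintro ⟨⟨h2, -⟩, -⟩; rw [hn.1] at h2; omega),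
    if_neg (by rintro ⟨⟨h2, -⟩, -⟩; rw [hn.1] at h2; omega), if_pos ⟨hn, hdu⟩]

lemma send_poor {u v : V} (hadj : G.Adj u v) (hp : poor G v) (hdu : 7 ≤ G.degree u) :
    send G u v = 1/2 := by
  unfold send
  rw [if_pos hadj, if_neg (by rintro ⟨⟨h2, -⟩, -⟩; rw [hp.1] at h2; omega),
    if_neg (by rintro ⟨⟨h2, -⟩, -⟩; rw [hp.1] at h2; omega),
    if_neg (by rintro ⟨⟨h2, -⟩, -⟩; rw [hp.1] at h2; omega), if_pos ⟨hp, hdu⟩]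

-- sender of degree ≤ 2 sends nothing
lemma send_sender2 {u v : V} (h : G.degree u ≤ 2) : send G u v = 0 := by
  unfold send
  split_ifs with h1 h2 h3 h4 h5 <;> first
  | rfl
  | (exfalso; omega)

-- sender of degree 3: sends at most 1/2, and only to degree-2 receivers
lemma send_sender3_cap {u v : V} (h : G.degree u = 3) : send G u v ≤ 1/2 := by
  unfold send
  split_ifs with h1 h2 h3 h4 h5
  · exact absurd h2.2 (by omega)
  · norm_num
  · exact absurd h4.2 (by omega)
  · exact absurd h5.2 (by omega)
  · norm_num
  · norm_num

lemma send_sender3_zero {u v : V} (h : G.degree u = 3) (h2 : G.degree v ≠ 2) :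
    send G u v = 0 := by
  unfold send
  split_ifs with h1 h2' h3 h4 h5 <;> first
  | rfl
  | (exfalso; first | omega | exact h2 h2'.1.1 | exact h2 h3.1.1)

-- receiver not paired: at most 1/2
lemma send_cap_not_paired {u v : V} (h : ¬ paired G v) : send G u v ≤ 1/2 := by
  unfold send
  split_ifs with h1 h2 h3 h4 h5
  · exact absurd h2.1 h
  · norm_num
  · norm_num
  · norm_num
  · norm_num
  · norm_num

-- receiver of degree 3: at most 1/4
lemma send_cap_receiver3 {u v : V} (h : G.degree v = 3) : send G u v ≤ 1/4 := by
  unfold send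
  split_ifs with h1 h2 h3 h4 h5
  · have := h2.1.1; omega
  · have := h3.1.1; omega
  · norm_num
  · have := h5.1.1; omega
  · norm_num
  · norm_num

-- receiver of degree 3 which is not needy: 0
lemma send_receiver3_zero {u v : V} (h : G.degree v = 3) (hn : ¬ needy G v) :
    send G u v = 0 := by
  unfold send
  split_ifs with h1 h2 h3 h4 h5 <;> first
  | rfl
  | (exfalso; rw [h2.1.1] at h; omega)
  | (exfalso; rw [h3.1.1] at h; omega)
  | (exfalso; exact hn h4.1)
  | (exfalso; rw [h5.1.1] at h; omega)

-- receiver of degree ≥ 4: 0 unless sender has degree ≥ 7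
lemma send_receiver_big_zero {u v : V} (h : 4 ≤ G.degree v) (hu : G.degree u ≤ 6) :
    send G u v = 0 := by
  unfold send
  split_ifs with h1 h2 h3 h4 h5 <;> first
  | rfl
  | (exfalso; rw [h2.1.1] at h; omega)
  | (exfalso; rw [h3.1.1] at h; omega)
  | (exfalso; rw [h4.1.1] at h; omega)
  | (exfalso; omega)

-- receiver of degree ≥ 4: at most 1/2
lemma send_cap_receiver_big {u v : V} (h : 4 ≤ G.degree v) : send G u v ≤ 1/2 := by
  unfold send
  split_ifs with h1 h2 h3 h4 h5
  · have := h2.1.1; omega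
  · have := h3.1.1; omega
  · have := h4.1.1; omega
  · norm_num
  · norm_num
  · norm_num

noncomputable def sent (v : V) : ℚ := ∑ u, send G v u
noncomputable def recv (v : V) : ℚ := ∑ u, send G u v

lemma sent_eq_nbr (v : V) : sent G v = ∑ u ∈ G.neighborFinset v, send G v u := by
  unfold sent
  rw [← Finset.sum_subset (Finset.subset_univ (G.neighborFinset v))]
  intro x _ hx
  exact send_of_not_adj G (by rwa [← mem_neighborFinset])

lemma recv_nonneg (v : V) : 0 ≤ recv G v :=
  Finset.sum_nonneg fun u _ => send_nonneg G u v

-- uniform cap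
lemma sent_cap (v : V) (c : ℚ) (hc : 0 ≤ c)
    (h : ∀ u ∈ G.neighborFinset v, send G v u ≤ c) :
    sent G v ≤ (G.degree v : ℚ) * c := by
  rw [sent_eq_nbr]
  calc ∑ u ∈ G.neighborFinset v, send G v u ≤ ∑ _u ∈ G.neighborFinset v, c :=
        Finset.sum_le_sum h
    _ = (G.degree v : ℚ) * c := by
        rw [Finset.sum_const, nsmul_eq_mul, card_neighborFinset_eq_degree]

-- cap with one special element
lemma sent_cap_special (v p : V) (hp : p ∈ G.neighborFinset v) (c : ℚ) (hc : 0 ≤ c)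
    (h : ∀ u ∈ G.neighborFinset v, u ≠ p → send G v u ≤ c) :
    sent G v ≤ 1 + ((G.degree v : ℚ) - 1) * c := by
  rw [sent_eq_nbr, ← Finset.add_sum_erase _ _ hp]
  have h1 : ∑ u ∈ (G.neighborFinset v).erase p, send G v u ≤
      ((G.degree v : ℚ) - 1) * c := by
    calc ∑ u ∈ (G.neighborFinset v).erase p, send G v u
        ≤ ∑ _u ∈ (G.neighborFinset v).erase p, c :=
          Finset.sum_le_sum fun u hu =>
            h u (Finset.mem_of_mem_erase hu) (Finset.ne_of_mem_erase hu)
      _ = ((G.degree v : ℚ) - 1) * c := by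
          rw [Finset.sum_const, nsmul_eq_mul, Finset.card_erase_of_mem hp,
            card_neighborFinset_eq_degree]
          have : 1 ≤ G.degree v := by
            rw [← card_neighborFinset_eq_degree]
            exact Finset.card_pos.mpr ⟨p, hp⟩
          push_cast [Nat.cast_sub this]
          ring
  linarith [send_le_one G v p]

-- split cap by degree-2 receivers
lemma sent_cap_split (v : V) (c1 c2 : ℚ)
    (h : ∀ u ∈ G.neighborFinset v,
      send G v u ≤ if G.degree u = 2 then c1 else c2) :
    sent G v ≤ (((G.neighborFinset v).filter (fun u => G.degree u = 2)).card : ℚ) * c1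
      + ((G.degree v : ℚ) -
          ((G.neighborFinset v).filter (fun u => G.degree u = 2)).card) * c2 := by
  rw [sent_eq_nbr]
  have hb : ∑ u ∈ G.neighborFinset v, send G v u ≤
      ∑ u ∈ G.neighborFinset v, (if G.degree u = 2 then c1 else c2) :=
    Finset.sum_le_sum h
  rw [Finset.sum_ite, Finset.sum_const, Finset.sum_const, nsmul_eq_mul, nsmul_eq_mul] at hb
  have hcc : ((G.neighborFinset v).filter (fun u => ¬ G.degree u = 2)).card
      = G.degree v - ((G.neighborFinset v).filter (fun u => G.degree u = 2)).card := by
    have := Finset.card_filter_add_card_filter_not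
      (s := G.neighborFinset v) (p := fun u => G.degree u = 2)
    rw [card_neighborFinset_eq_degree] at this
    omega
  rw [hcc] at hb
  have hle : ((G.neighborFinset v).filter (fun u => G.degree u = 2)).card ≤ G.degree v := by
    rw [← card_neighborFinset_eq_degree]
    exact Finset.card_le_card (Finset.filter_subset _ _)
  push_cast [Nat.cast_sub hle] at hb ⊢
  linarith

lemma key
    (hδ2 : ∀ v, 2 ≤ G.degree v)
    (htri : ¬ ∃ a b c : V, G.Adj a b ∧ G.Adj b c ∧ G.Adj a c ∧
      G.degree a = 2 ∧ G.degree b = 2)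
    (hC1 : ¬ ∃ v₁ v₂ v₃ : V, G.Adj v₁ v₂ ∧ G.Adj v₂ v₃ ∧ v₁ ≠ v₃ ∧
        G.degree v₁ = 2 ∧ G.degree v₂ ≤ 3 ∧ G.degree v₃ ≤ 3)
    (hC2 : ¬ ∃ v₁ v₂ v₃ v₄ : V, G.Adj v₁ v₂ ∧ G.Adj v₂ v₃ ∧ G.Adj v₃ v₄ ∧
        v₁ ≠ v₃ ∧ v₁ ≠ v₄ ∧ v₂ ≠ v₄ ∧
        G.degree v₁ = 2 ∧ G.degree v₂ = 2 ∧ G.degree v₄ = 2)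
    (hC3 : ¬ ∃ v₁ v₂ v₃ v₄ : V, G.Adj v₁ v₂ ∧ G.Adj v₂ v₃ ∧ G.Adj v₃ v₄ ∧
        v₁ ≠ v₃ ∧ v₁ ≠ v₄ ∧ v₂ ≠ v₄ ∧
        G.degree v₁ = 2 ∧ G.degree v₂ = 2 ∧ G.degree v₃ = 4 ∧ G.degree v₄ = 3)
    (hC4 : ¬ ∃ w a b c d : V, G.Adj w a ∧ G.Adj w b ∧ G.Adj w c ∧ G.Adj w d ∧
        a ≠ b ∧ a ≠ c ∧ a ≠ d ∧ b ≠ c ∧ b ≠ d ∧ c ≠ d ∧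
        G.degree w = 4 ∧ G.degree a = 2 ∧ G.degree b = 2 ∧ G.degree c = 2 ∧
        G.degree d ≤ 6)
    (hC5 : ¬ ∃ v₁ v₂ v₃ v₄ : V, G.Adj v₁ v₂ ∧ G.Adj v₂ v₃ ∧ G.Adj v₃ v₄ ∧
        v₁ ≠ v₃ ∧ v₁ ≠ v₄ ∧ v₂ ≠ v₄ ∧
        G.degree v₁ = 2 ∧ G.degree v₂ = 4 ∧ G.degree v₃ = 3 ∧ G.degree v₄ = 2)
    (hC6 : ¬ ∃ a b c : V, G.Adj a b ∧ G.Adj b c ∧ G.Adj a c ∧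
        G.degree a = 2 ∧ G.degree b = 4 ∧ G.degree c = 3)
    (hC7 : ¬ ∃ w a b c d e : V, G.Adj w a ∧ G.Adj w b ∧ G.Adj w c ∧ G.Adj w d ∧ G.Adj w e ∧
        a ≠ b ∧ a ≠ c ∧ a ≠ d ∧ a ≠ e ∧ b ≠ c ∧ b ≠ d ∧ b ≠ e ∧ c ≠ d ∧ c ≠ e ∧ d ≠ e ∧
        G.degree w = 5 ∧ G.degree a = 2 ∧ G.degree b = 2 ∧ G.degree c = 2 ∧
        G.degree d = 2 ∧ G.degree e = 2)
    (hC8 : ¬ ∃ w a b c d e : V, G.Adj w a ∧ G.Adj w b ∧ G.Adj w c ∧ G.Adj w d ∧ G.Adj w e ∧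
        a ≠ b ∧ a ≠ c ∧ a ≠ d ∧ a ≠ e ∧ b ≠ c ∧ b ≠ d ∧ b ≠ e ∧ c ≠ d ∧ c ≠ e ∧ d ≠ e ∧
        G.degree w = 5 ∧ G.degree a = 2 ∧ G.degree b = 2 ∧ G.degree c = 2 ∧
        G.degree d = 2 ∧ G.degree e = 3)
    (v : V) : sent G v ≤ (G.degree v : ℚ) - 3 + recv G v := by
  have hd := hδ2 v
  by_cases hv2 : G.degree v = 2
  · -- degree-2 vertex: sends nothing, receives at least 1
    have hs0 : sent G v = 0 :=
      Finset.sum_eq_zero fun u _ => send_sender2 G (by omega)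
    rcases nbrs2 G hv2 with ⟨a, b, hab, hN⟩
    have haN : a ∈ G.neighborFinset v := by rw [hN]; simp
    have hbN : b ∈ G.neighborFinset v := by rw [hN]; simp
    have hva : G.Adj v a := (mem_neighborFinset _ _ _).mp haN
    have hvb : G.Adj v b := (mem_neighborFinset _ _ _).mp hbN
    have hrecv : 1 ≤ recv G v := by
      by_cases hp : paired G v
      · obtain ⟨-, p, hpN, hp2⟩ := hp
        have hpab : p = a ∨ p = b := by rw [hN] at hpN; simpa using hpN
        have main : ∀ q r : V, q ∈ G.neighborFinset v → r ∈ G.neighborFinset v →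
            q ≠ r → G.degree q = 2 → 1 ≤ recv G v := by
          intro q r hqN hrN hqr hq2
          have hvq : G.Adj v q := (mem_neighborFinset _ _ _).mp hqN
          have hvr : G.Adj v r := (mem_neighborFinset _ _ _).mp hrN
          have hr4 : 4 ≤ G.degree r := L1 G hC1 hq2 hvq.symm hvr hqr (by omega)
          have h1 : send G r v = 1 :=
            send_paired G hvr.symm ⟨hv2, q, hqN, hq2⟩ hr4
          have hle := Finset.single_le_sum (f := fun u => send G u v)
            (fun i _ => send_nonneg G i v) (Finset.mem_univ r)
          have hle' : send G r v ≤ recv G v := hle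
          rw [h1] at hle'
          exact hle'
        rcases hpab with rfl | rfl
        · exact main p b hpN hbN hab hp2
        · exact main p a hpN haN (Ne.symm hab) hp2
      · have h3a : 3 ≤ G.degree a := by
          rcases Nat.lt_or_ge (G.degree a) 3 with h | h
          · exact absurd ⟨hv2, a, haN, by have := hδ2 a; omega⟩ hp
          · exact h
        have h3b : 3 ≤ G.degree b := by
          rcases Nat.lt_or_ge (G.degree b) 3 with h | h
          · exact absurd ⟨hv2, b, hbN, by have := hδ2 b; omega⟩ hp
          · exact h
        have hsa : send G a v = 1/2 := send_solo G hva.symm ⟨hv2, hp⟩ h3a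
        have hsb : send G b v = 1/2 := send_solo G hvb.symm ⟨hv2, hp⟩ h3b
        have hsub : ({a, b} : Finset V) ⊆ Finset.univ := Finset.subset_univ _
        have := Finset.sum_le_sum_of_subset_of_nonneg hsub
          (fun i _ _ => send_nonneg G i v)
        rw [Finset.sum_pair hab, hsa, hsb] at this
        unfold recv
        linarith
    rw [hs0, hv2]
    push_cast
    linarith
  · by_cases hv3 : G.degree v = 3
    · -- degree-3 vertex
      by_cases hz : ∃ z ∈ G.neighborFinset v, G.degree z = 2
      · obtain ⟨z, hzN, hz2⟩ := hz
        have hvz : G.Adj v z := (mem_neighborFinset _ _ _).mp hzN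
        have hbig : ∀ u ∈ G.neighborFinset v, u ≠ z → 4 ≤ G.degree u := by
          intro u huN hne
          exact L1 G hC1 hz2 hvz.symm ((mem_neighborFinset _ _ _).mp huN)
            (Ne.symm hne) (by omega)
        have hsent : sent G v ≤ 1/2 := by
          rw [sent_eq_nbr]
          have hterm : ∀ u ∈ G.neighborFinset v,
              send G v u ≤ if u = z then 1/2 else 0 := by
            intro u huN
            by_cases hu : u = z
            · rw [if_pos hu]; exact send_sender3_cap G hv3
            · rw [if_neg hu, send_sender3_zero G hv3 (by have := hbig u huN hu; omega)]
          calc ∑ u ∈ G.neighborFinset v, send G v u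
              ≤ ∑ u ∈ G.neighborFinset v, (if u = z then (1/2 : ℚ) else 0) :=
                Finset.sum_le_sum hterm
            _ = 1/2 := by rw [Finset.sum_ite_eq' _ z fun _ => (1/2 : ℚ), if_pos hzN]
        have hrecv : 1/2 ≤ recv G v := by
          have hec : ((G.neighborFinset v).erase z).card = 2 := by
            rw [Finset.card_erase_of_mem hzN, card_neighborFinset_eq_degree, hv3]
          obtain ⟨x, y, hxy, hE⟩ := Finset.card_eq_two.mp hec
          have hxN : x ∈ (G.neighborFinset v).erase z := by rw [hE]; simp
          have hyN : y ∈ (G.neighborFinset v).erase z := by rw [hE]; simp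
          have hxN' := Finset.mem_of_mem_erase hxN
          have hyN' := Finset.mem_of_mem_erase hyN
          have hneedy : needy G v := ⟨hv3, z, hzN, hz2⟩
          have hsx : send G x v = 1/4 :=
            send_needy G ((mem_neighborFinset _ _ _).mp hxN').symm hneedy
              (hbig x hxN' (Finset.ne_of_mem_erase hxN))
          have hsy : send G y v = 1/4 :=
            send_needy G ((mem_neighborFinset _ _ _).mp hyN').symm hneedy
              (hbig y hyN' (Finset.ne_of_mem_erase hyN))
          have := Finset.sum_le_sum_of_subset_of_nonneg
            (Finset.subset_univ ({x, y} : Finset V)) (fun i _ _ => send_nonneg G i v)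
          rw [Finset.sum_pair hxy, hsx, hsy] at this
          unfold recv
          linarith
        rw [hv3]
        push_cast
        linarith
      · have hs0 : sent G v = 0 := by
          rw [sent_eq_nbr]
          exact Finset.sum_eq_zero fun u huN =>
            send_sender3_zero G hv3 (fun h2 => hz ⟨u, huN, h2⟩)
        rw [hs0, hv3]
        have := recv_nonneg G v
        push_cast
        linarith
    · by_cases hv4 : G.degree v = 4
      · -- degree-4 vertex
        by_cases hp : ∃ p ∈ G.neighborFinset v, paired G p
        · obtain ⟨p, hpN, hpp⟩ := hp
          have hvp : G.Adj v p := (mem_neighborFinset _ _ _).mp hpN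
          have hsent : sent G v ≤ 1 + ((G.degree v : ℚ) - 1) * 0 := by
            apply sent_cap_special G v p hpN 0 le_rfl
            intro u huN hne
            have hvu : G.Adj v u := (mem_neighborFinset _ _ _).mp huN
            have hu2 : G.degree u ≠ 2 := L2 G htri hC2 (by omega) hpp hvp hvu hne
            have hu3 : G.degree u ≠ 3 := L3 G hC3 hv4 hpp hvp hvu
            rw [send_receiver_big_zero G (by have := hδ2 u; omega) (by omega)]
          have := recv_nonneg G v
          rw [hv4] at hsent ⊢
          push_cast at hsent ⊢
          linarith
        · set s := (G.neighborFinset v).filter (fun u => G.degree u = 2) with hs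
          by_cases h3 : 3 ≤ s.card
          · obtain ⟨x, hxN, hx7, hc3⟩ := L4 G hC4 hv4 h3
            have hpoor : poor G v := ⟨hv4, h3⟩
            have hrx : send G x v = 1/2 :=
              send_poor G ((mem_neighborFinset _ _ _).mp hxN).symm hpoor hx7
            have hrecv : 1/2 ≤ recv G v := by
              have hle := Finset.single_le_sum (f := fun u => send G u v)
                (fun i _ => send_nonneg G i v) (Finset.mem_univ x)
              have hle' : send G x v ≤ recv G v := hle
              rw [hrx] at hle'
              exact hle'
            obtain ⟨z, hzs⟩ := Finset.card_pos.mp (by omega : 0 < s.card)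
            have hzN : z ∈ G.neighborFinset v := (Finset.mem_filter.mp hzs).1
            have hz2 : G.degree z = 2 := (Finset.mem_filter.mp hzs).2
            have hsent := sent_cap_split G v (1/2) 0 (by
              intro u huN
              have hvu : G.Adj v u := (mem_neighborFinset _ _ _).mp huN
              by_cases hu2 : G.degree u = 2
              · rw [if_pos hu2]
                exact send_cap_not_paired G (fun hpu => hp ⟨u, huN, hpu⟩)
              · rw [if_neg hu2]
                by_cases hu3 : G.degree u = 3
                · rw [send_receiver3_zero G hu3
                    (L56 G hC5 hC6 hv4 ((mem_neighborFinset _ _ _).mp hzN) hz2 hvu)]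
                · rw [send_receiver_big_zero G (by have := hδ2 u; omega) (by omega)])
            rw [← hs, hc3, hv4] at hsent
            rw [hv4]
            push_cast at hsent ⊢
            linarith
          · by_cases h1 : ∃ z ∈ G.neighborFinset v, G.degree z = 2
            · obtain ⟨z, hzN, hz2⟩ := h1
              have hsent := sent_cap_split G v (1/2) 0 (by
                intro u huN
                have hvu : G.Adj v u := (mem_neighborFinset _ _ _).mp huN
                by_cases hu2 : G.degree u = 2
                · rw [if_pos hu2]
                  exact send_cap_not_paired G (fun hpu => hp ⟨u, huN, hpu⟩)
                · rw [if_neg hu2]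
                  by_cases hu3 : G.degree u = 3
                  · rw [send_receiver3_zero G hu3
                      (L56 G hC5 hC6 hv4 ((mem_neighborFinset _ _ _).mp hzN) hz2 hvu)]
                  · rw [send_receiver_big_zero G (by have := hδ2 u; omega) (by omega)])
              rw [← hs, hv4] at hsent
              have hc2 : (s.card : ℚ) ≤ 2 := by exact_mod_cast Nat.le_of_lt_succ (by omega)
              have := recv_nonneg G v
              rw [hv4]
              push_cast at hsent ⊢
              linarith
            · have hsent := sent_cap_split G v (1/2) (1/4) (by
                intro u huN
                by_cases hu2 : G.degree u = 2
                · exact absurd ⟨u, huN, hu2⟩ h1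
                · rw [if_neg hu2]
                  by_cases hu3 : G.degree u = 3
                  · exact send_cap_receiver3 G hu3
                  · rw [send_receiver_big_zero G (by have := hδ2 u; omega) (by omega)]
                    norm_num)
              have hc0 : s.card = 0 := by
                rw [Finset.card_eq_zero, hs, Finset.filter_eq_empty_iff]
                intro u huN h2
                exact h1 ⟨u, huN, h2⟩
              rw [← hs, hc0, hv4] at hsent
              have := recv_nonneg G v
              rw [hv4]
              push_cast at hsent ⊢
              linarith
      · -- degree ≥ 5
        have h5 : 5 ≤ G.degree v := by omega
        by_cases hp : ∃ p ∈ G.neighborFinset v, paired G p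
        · obtain ⟨p, hpN, hpp⟩ := hp
          have hvp : G.Adj v p := (mem_neighborFinset _ _ _).mp hpN
          by_cases h7 : 7 ≤ G.degree v
          · have hsent : sent G v ≤ 1 + ((G.degree v : ℚ) - 1) * (1/2) := by
              apply sent_cap_special G v p hpN (1/2) (by norm_num)
              intro u huN hne
              have hvu : G.Adj v u := (mem_neighborFinset _ _ _).mp huN
              have hu2 : G.degree u ≠ 2 := L2 G htri hC2 (by omega) hpp hvp hvu hne
              by_cases hu3 : G.degree u = 3
              · calc send G v u ≤ 1/4 := send_cap_receiver3 G hu3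
                  _ ≤ 1/2 := by norm_num
              · exact send_cap_receiver_big G (by have := hδ2 u; omega)
            have hd7 : (7 : ℚ) ≤ G.degree v := by exact_mod_cast h7
            have := recv_nonneg G v
            linarith
          · have hsent : sent G v ≤ 1 + ((G.degree v : ℚ) - 1) * (1/4) := by
              apply sent_cap_special G v p hpN (1/4) (by norm_num)
              intro u huN hne
              have hvu : G.Adj v u := (mem_neighborFinset _ _ _).mp huN
              have hu2 : G.degree u ≠ 2 := L2 G htri hC2 (by omega) hpp hvp hvu hne
              by_cases hu3 : G.degree u = 3
              · exact send_cap_receiver3 G hu3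
              · rw [send_receiver_big_zero G (by have := hδ2 u; omega) (by omega)]
                norm_num
            have hd5 : (5 : ℚ) ≤ G.degree v := by exact_mod_cast h5
            have := recv_nonneg G v
            linarith
        · by_cases h6 : 6 ≤ G.degree v
          · have hsent : sent G v ≤ (G.degree v : ℚ) * (1/2) := by
              apply sent_cap G v (1/2) (by norm_num)
              intro u huN
              by_cases hu2 : G.degree u = 2
              · exact send_cap_not_paired G (fun hpu => hp ⟨u, huN, hpu⟩)
              · by_cases hu3 : G.degree u = 3
                · calc send G v u ≤ 1/4 := send_cap_receiver3 G hu3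
                    _ ≤ 1/2 := by norm_num
                · exact send_cap_receiver_big G (by have := hδ2 u; omega)
            have hd6 : (6 : ℚ) ≤ G.degree v := by exact_mod_cast h6
            have := recv_nonneg G v
            linarith
          · -- degree exactly 5, no paired neighbor
            have hv5 : G.degree v = 5 := by omega
            set s := (G.neighborFinset v).filter (fun u => G.degree u = 2) with hs
            by_cases h4 : 4 ≤ s.card
            · obtain ⟨x, hxN, hx4, hc4⟩ := L78 G hδ2 hC7 hC8 hv5 h4
              have hxs : x ∉ s := by
                rw [hs, Finset.mem_filter]
                rintro ⟨-, h⟩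
                omega
              have hins : insert x s ⊆ G.neighborFinset v := by
                intro y hy
                rcases Finset.mem_insert.mp hy with rfl | hy
                · exact hxN
                · rw [hs] at hy
                  exact (Finset.mem_filter.mp hy).1
              have hNeq : G.neighborFinset v = insert x s := by
                apply (Finset.eq_of_subset_of_card_le hins _).symm
                rw [Finset.card_insert_of_notMem hxs, card_neighborFinset_eq_degree,
                  hv5, hs, hc4]
              have hsent := sent_cap_split G v (1/2) 0 (by
                intro u huN
                by_cases hu2 : G.degree u = 2
                · rw [if_pos hu2]
                  exact send_cap_not_paired G (fun hpu => hp ⟨u, huN, hpu⟩)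
                · rw [if_neg hu2]
                  have hux : u = x := by
                    rw [hNeq] at huN
                    rcases Finset.mem_insert.mp huN with rfl | huN
                    · rfl
                    · rw [hs] at huN
                      exact absurd (Finset.mem_filter.mp huN).2 hu2
                  subst hux
                  rw [send_receiver_big_zero G hx4 (by omega)])
              rw [← hs, hc4, hv5] at hsent
              have := recv_nonneg G v
              rw [hv5]
              push_cast at hsent ⊢
              linarith
            · have hsent := sent_cap_split G v (1/2) (1/4) (by
                intro u huN
                by_cases hu2 : G.degree u = 2
                · rw [if_pos hu2]
                  exact send_cap_not_paired G (fun hpu => hp ⟨u, huN, hpu⟩)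
                · rw [if_neg hu2]
                  by_cases hu3 : G.degree u = 3
                  · exact send_cap_receiver3 G hu3
                  · rw [send_receiver_big_zero G (by have := hδ2 u; omega) (by omega)]
                    norm_num)
              rw [← hs, hv5] at hsent
              have hc3 : (s.card : ℚ) ≤ 3 := by exact_mod_cast Nat.le_of_lt_succ (by omega)
              have hc0 : (0 : ℚ) ≤ s.card := by positivity
              have := recv_nonneg G v
              rw [hv5]
              push_cast at hsent ⊢
              linarith

lemma discharge
    (hδ : (∀ v, 2 ≤ G.degree v) ∧ (∃ v, G.degree v = 2))
    (havg : (2 * G.edgeFinset.card : ℚ) / Fintype.card V < 3)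
    (htri : ¬ ∃ a b c : V, G.Adj a b ∧ G.Adj b c ∧ G.Adj a c ∧
      G.degree a = 2 ∧ G.degree b = 2)
    (hC1 : ¬ ∃ v₁ v₂ v₃ : V, G.Adj v₁ v₂ ∧ G.Adj v₂ v₃ ∧ v₁ ≠ v₃ ∧
        G.degree v₁ = 2 ∧ G.degree v₂ ≤ 3 ∧ G.degree v₃ ≤ 3)
    (hC2 : ¬ ∃ v₁ v₂ v₃ v₄ : V, G.Adj v₁ v₂ ∧ G.Adj v₂ v₃ ∧ G.Adj v₃ v₄ ∧
        v₁ ≠ v₃ ∧ v₁ ≠ v₄ ∧ v₂ ≠ v₄ ∧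
        G.degree v₁ = 2 ∧ G.degree v₂ = 2 ∧ G.degree v₄ = 2)
    (hC3 : ¬ ∃ v₁ v₂ v₃ v₄ : V, G.Adj v₁ v₂ ∧ G.Adj v₂ v₃ ∧ G.Adj v₃ v₄ ∧
        v₁ ≠ v₃ ∧ v₁ ≠ v₄ ∧ v₂ ≠ v₄ ∧
        G.degree v₁ = 2 ∧ G.degree v₂ = 2 ∧ G.degree v₃ = 4 ∧ G.degree v₄ = 3)
    (hC4 : ¬ ∃ w a b c d : V, G.Adj w a ∧ G.Adj w b ∧ G.Adj w c ∧ G.Adj w d ∧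
        a ≠ b ∧ a ≠ c ∧ a ≠ d ∧ b ≠ c ∧ b ≠ d ∧ c ≠ d ∧
        G.degree w = 4 ∧ G.degree a = 2 ∧ G.degree b = 2 ∧ G.degree c = 2 ∧
        G.degree d ≤ 6)
    (hC5 : ¬ ∃ v₁ v₂ v₃ v₄ : V, G.Adj v₁ v₂ ∧ G.Adj v₂ v₃ ∧ G.Adj v₃ v₄ ∧
        v₁ ≠ v₃ ∧ v₁ ≠ v₄ ∧ v₂ ≠ v₄ ∧
        G.degree v₁ = 2 ∧ G.degree v₂ = 4 ∧ G.degree v₃ = 3 ∧ G.degree v₄ = 2)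
    (hC6 : ¬ ∃ a b c : V, G.Adj a b ∧ G.Adj b c ∧ G.Adj a c ∧
        G.degree a = 2 ∧ G.degree b = 4 ∧ G.degree c = 3)
    (hC7 : ¬ ∃ w a b c d e : V, G.Adj w a ∧ G.Adj w b ∧ G.Adj w c ∧ G.Adj w d ∧ G.Adj w e ∧
        a ≠ b ∧ a ≠ c ∧ a ≠ d ∧ a ≠ e ∧ b ≠ c ∧ b ≠ d ∧ b ≠ e ∧ c ≠ d ∧ c ≠ e ∧ d ≠ e ∧
        G.degree w = 5 ∧ G.degree a = 2 ∧ G.degree b = 2 ∧ G.degree c = 2 ∧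
        G.degree d = 2 ∧ G.degree e = 2)
    (hC8 : ¬ ∃ w a b c d e : V, G.Adj w a ∧ G.Adj w b ∧ G.Adj w c ∧ G.Adj w d ∧ G.Adj w e ∧
        a ≠ b ∧ a ≠ c ∧ a ≠ d ∧ a ≠ e ∧ b ≠ c ∧ b ≠ d ∧ b ≠ e ∧ c ≠ d ∧ c ≠ e ∧ d ≠ e ∧
        G.degree w = 5 ∧ G.degree a = 2 ∧ G.degree b = 2 ∧ G.degree c = 2 ∧
        G.degree d = 2 ∧ G.degree e = 3) : False := by
  obtain ⟨hδ2, v0, hv0⟩ := hδ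
  have hn : 0 < Fintype.card V := Fintype.card_pos_iff.mpr ⟨v0⟩
  have hn' : (0 : ℚ) < Fintype.card V := by exact_mod_cast hn
  rw [div_lt_iff₀ hn'] at havg
  have hhs : ∑ v, G.degree v = 2 * G.edgeFinset.card :=
    G.sum_degrees_eq_twice_card_edges
  have htot : ∑ v : V, ((G.degree v : ℚ) - 3) < 0 := by
    have he : ∑ v : V, ((G.degree v : ℚ) - 3)
        = (∑ v, (G.degree v : ℚ)) - 3 * Fintype.card V := by
      rw [Finset.sum_sub_distrib, Finset.sum_const, Finset.card_univ, nsmul_eq_mul]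
      ring
    have he2 : (∑ v, (G.degree v : ℚ)) = 2 * G.edgeFinset.card := by
      rw [← Nat.cast_sum]
      exact_mod_cast congrArg (Nat.cast : ℕ → ℚ) hhs
    rw [he, he2]
    linarith
  have hkey := key G hδ2 htri hC1 hC2 hC3 hC4 hC5 hC6 hC7 hC8
  have hsum : ∑ v, sent G v = ∑ v, recv G v := by
    unfold sent recv
    exact Finset.sum_comm
  have hle : ∑ v, sent G v ≤ ∑ v : V, ((G.degree v : ℚ) - 3 + recv G v) :=
    Finset.sum_le_sum fun v _ => hkey v
  rw [Finset.sum_add_distrib] at hle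
  linarith

open SimpleGraph

theorem stmt_7 {V : Type} [Fintype V] [DecidableEq V] (G : SimpleGraph V)
    [DecidableRel G.Adj]
    (hδ : (∀ v, 2 ≤ G.degree v) ∧ (∃ v, G.degree v = 2))
    (havg : (2 * G.edgeFinset.card : ℚ) / Fintype.card V < 3)
    (htri : ¬ ∃ a b c : V, G.Adj a b ∧ G.Adj b c ∧ G.Adj a c ∧
      G.degree a = 2 ∧ G.degree b = 2) :
    -- a (2, 3⁻, 3⁻)-path
    (∃ v₁ v₂ v₃ : V, G.Adj v₁ v₂ ∧ G.Adj v₂ v₃ ∧ v₁ ≠ v₃ ∧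
        G.degree v₁ = 2 ∧ G.degree v₂ ≤ 3 ∧ G.degree v₃ ≤ 3) ∨
    -- a (2, 2, ∞, 2)-path
    (∃ v₁ v₂ v₃ v₄ : V, G.Adj v₁ v₂ ∧ G.Adj v₂ v₃ ∧ G.Adj v₃ v₄ ∧
        v₁ ≠ v₃ ∧ v₁ ≠ v₄ ∧ v₂ ≠ v₄ ∧
        G.degree v₁ = 2 ∧ G.degree v₂ = 2 ∧ G.degree v₄ = 2) ∨
    -- a (2, 2, 4, 3)-path
    (∃ v₁ v₂ v₃ v₄ : V, G.Adj v₁ v₂ ∧ G.Adj v₂ v₃ ∧ G.Adj v₃ v₄ ∧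
        v₁ ≠ v₃ ∧ v₁ ≠ v₄ ∧ v₂ ≠ v₄ ∧
        G.degree v₁ = 2 ∧ G.degree v₂ = 2 ∧ G.degree v₃ = 4 ∧ G.degree v₄ = 3) ∨
    -- a (4; 2, 2, 2, 6⁻)-star
    (∃ w a b c d : V, G.Adj w a ∧ G.Adj w b ∧ G.Adj w c ∧ G.Adj w d ∧
        a ≠ b ∧ a ≠ c ∧ a ≠ d ∧ b ≠ c ∧ b ≠ d ∧ c ≠ d ∧
        G.degree w = 4 ∧ G.degree a = 2 ∧ G.degree b = 2 ∧ G.degree c = 2 ∧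
        G.degree d ≤ 6) ∨
    -- a (2, 4, 3, 2)-path
    (∃ v₁ v₂ v₃ v₄ : V, G.Adj v₁ v₂ ∧ G.Adj v₂ v₃ ∧ G.Adj v₃ v₄ ∧
        v₁ ≠ v₃ ∧ v₁ ≠ v₄ ∧ v₂ ≠ v₄ ∧
        G.degree v₁ = 2 ∧ G.degree v₂ = 4 ∧ G.degree v₃ = 3 ∧ G.degree v₄ = 2) ∨
    -- a (2, 4, 3)-triangle
    (∃ a b c : V, G.Adj a b ∧ G.Adj b c ∧ G.Adj a c ∧
        G.degree a = 2 ∧ G.degree b = 4 ∧ G.degree c = 3) ∨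
    -- a (5; 2, 2, 2, 2, 2)-star
    (∃ w a b c d e : V, G.Adj w a ∧ G.Adj w b ∧ G.Adj w c ∧ G.Adj w d ∧ G.Adj w e ∧
        a ≠ b ∧ a ≠ c ∧ a ≠ d ∧ a ≠ e ∧ b ≠ c ∧ b ≠ d ∧ b ≠ e ∧ c ≠ d ∧ c ≠ e ∧ d ≠ e ∧
        G.degree w = 5 ∧ G.degree a = 2 ∧ G.degree b = 2 ∧ G.degree c = 2 ∧
        G.degree d = 2 ∧ G.degree e = 2) ∨
    -- a (5; 2, 2, 2, 2, 3)-star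
    (∃ w a b c d e : V, G.Adj w a ∧ G.Adj w b ∧ G.Adj w c ∧ G.Adj w d ∧ G.Adj w e ∧
        a ≠ b ∧ a ≠ c ∧ a ≠ d ∧ a ≠ e ∧ b ≠ c ∧ b ≠ d ∧ b ≠ e ∧ c ≠ d ∧ c ≠ e ∧ d ≠ e ∧
        G.degree w = 5 ∧ G.degree a = 2 ∧ G.degree b = 2 ∧ G.degree c = 2 ∧
        G.degree d = 2 ∧ G.degree e = 3) := by
  by_contra hcon
  simp only [not_or] at hcon
  obtain ⟨h1, h2, h3, h4, h5, h6, h7, h8⟩ := hcon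
  exact discharge G hδ havg htri h1 h2 h3 h4 h5 h6 h7 h8
end

section
/- Let G be a finite simple graph with minimum degree at least 2 and average degree strictly less than 10/3. Then G contains at least one of: a path v1v2v3 with deg(v1)=deg(v2)=2 (third vertex arbitrary); a path with degrees 2, 3, ≤6; a path with degrees 3, 3, 3; a path with degrees 2, 4, ≤3; or a path v1v2v3 with deg(v1)=deg(v3)=2 and deg(v2) ≤ 9. -/
open SimpleGraph Finset

private def fch (a b : ℕ) : ℚ :=
  if b = 2 then (if 3 ≤ a then 2/3 else 0)
  else if b = 3 then (if 7 ≤ a then 1/2 else if 4 ≤ a then 1/6 else 0)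
  else 0

private lemma fch_nonneg (a b : ℕ) : 0 ≤ fch a b := by
  unfold fch; split_ifs <;> first | rfl | omega | norm_num

private lemma fch_le (a b : ℕ) : fch a b ≤ 2/3 := by
  unfold fch; split_ifs <;> first | rfl | omega | norm_num

private lemma fch_two_left (b : ℕ) : fch 2 b = 0 := by
  unfold fch; split_ifs <;> first | rfl | omega | norm_num

private lemma fch_to_two (a : ℕ) (h : 3 ≤ a) : fch a 2 = 2/3 := by
  unfold fch; split_ifs <;> first | rfl | omega | norm_num

private lemma fch_three_left (b : ℕ) (h : b ≠ 2) : fch 3 b = 0 := by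
  unfold fch; split_ifs <;> first | rfl | omega | norm_num

private lemma fch_ge7 (a : ℕ) (h : 7 ≤ a) : fch a 3 = 1/2 := by
  unfold fch; split_ifs <;> first | rfl | omega | norm_num

private lemma fch_ge4 (a : ℕ) (h : 4 ≤ a) : 1/6 ≤ fch a 3 := by
  unfold fch; split_ifs <;> first | rfl | omega | norm_num

private lemma fch_four_left (b : ℕ) (h : b ≠ 2) : fch 4 b ≤ 1/6 := by
  unfold fch; split_ifs <;> first | rfl | omega | norm_num

private lemma fch_four_big (b : ℕ) (h : 4 ≤ b) : fch 4 b = 0 := by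
  unfold fch; split_ifs <;> first | rfl | omega | norm_num

private lemma fch_mid_left (a b : ℕ) (hb : b ≠ 2) (ha : a ≤ 6) : fch a b ≤ 1/6 := by
  unfold fch; split_ifs <;> first | rfl | omega | norm_num

private lemma fch_ne_two (a b : ℕ) (hb : b ≠ 2) : fch a b ≤ 1/2 := by
  unfold fch; split_ifs <;> first | rfl | omega | norm_num

theorem stmt_8 {V : Type} [Fintype V] [DecidableEq V] (G : SimpleGraph V)
    [DecidableRel G.Adj] [Nonempty V]
    (hδ : ∀ v, 2 ≤ G.degree v)
    (havg : (2 * G.edgeFinset.card : ℚ) / Fintype.card V < 10 / 3) :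
    -- a (2, 2, ∞)-path
    (∃ v₁ v₂ v₃ : V, G.Adj v₁ v₂ ∧ G.Adj v₂ v₃ ∧ v₁ ≠ v₃ ∧
        G.degree v₁ = 2 ∧ G.degree v₂ = 2) ∨
    -- a (2, 3, 6⁻)-path
    (∃ v₁ v₂ v₃ : V, G.Adj v₁ v₂ ∧ G.Adj v₂ v₃ ∧ v₁ ≠ v₃ ∧
        G.degree v₁ = 2 ∧ G.degree v₂ = 3 ∧ G.degree v₃ ≤ 6) ∨
    -- a (3, 3, 3)-path
    (∃ v₁ v₂ v₃ : V, G.Adj v₁ v₂ ∧ G.Adj v₂ v₃ ∧ v₁ ≠ v₃ ∧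
        G.degree v₁ = 3 ∧ G.degree v₂ = 3 ∧ G.degree v₃ = 3) ∨
    -- a (2, 4, 3⁻)-path
    (∃ v₁ v₂ v₃ : V, G.Adj v₁ v₂ ∧ G.Adj v₂ v₃ ∧ v₁ ≠ v₃ ∧
        G.degree v₁ = 2 ∧ G.degree v₂ = 4 ∧ G.degree v₃ ≤ 3) ∨
    -- a (2, 9⁻, 2)-path
    (∃ v₁ v₂ v₃ : V, G.Adj v₁ v₂ ∧ G.Adj v₂ v₃ ∧ v₁ ≠ v₃ ∧
        G.degree v₁ = 2 ∧ G.degree v₂ ≤ 9 ∧ G.degree v₃ = 2) := by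
  by_contra hcon
  push_neg at hcon
  obtain ⟨h1, h2, h3, h4, h5⟩ := hcon
  -- second neighbor
  have hsecond : ∀ v w : V, w ∈ G.neighborFinset v → ∃ u ∈ G.neighborFinset v, u ≠ w := by
    intro v w hw
    have hc : 1 < (G.neighborFinset v).card := by
      rw [G.card_neighborFinset_eq_degree]
      exact lt_of_lt_of_le one_lt_two (hδ v)
    exact Finset.exists_mem_ne hc w
  -- no two adjacent degree-2 vertices
  have c1 : ∀ u v : V, G.Adj u v → G.degree u = 2 → G.degree v ≠ 2 := by
    intro u v huv h2u h2v
    obtain ⟨w, hw, hwne⟩ := hsecond v u (G.mem_neighborFinset v u |>.mpr huv.symm)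
    exact h1 u v w huv ((G.mem_neighborFinset v w).mp hw) (Ne.symm hwne) h2u h2v
  -- at most one degree-2 neighbor for degree ≤ 9 vertices
  have c5 : ∀ v : V, G.degree v ≤ 9 → ∀ w₁ ∈ G.neighborFinset v, ∀ w₂ ∈ G.neighborFinset v,
      G.degree w₁ = 2 → G.degree w₂ = 2 → w₁ = w₂ := by
    intro v hv w₁ hw₁ w₂ hw₂ hd₁ hd₂
    by_contra hne
    exact absurd hd₂
      (h5 w₁ v w₂ ((G.mem_neighborFinset v w₁).mp hw₁).symm ((G.mem_neighborFinset v w₂).mp hw₂)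
        hne hd₁ hv)
  -- the key per-vertex discharging inequality
  have key : ∀ v : V, (10:ℚ)/3 ≤ (G.degree v : ℚ)
      + (∑ u ∈ G.neighborFinset v, fch (G.degree u) (G.degree v))
      - (∑ u ∈ G.neighborFinset v, fch (G.degree v) (G.degree u)) := by
    intro v
    have hNcard : (G.neighborFinset v).card = G.degree v := G.card_neighborFinset_eq_degree v
    have hd2 : 2 ≤ G.degree v := hδ v
    have hadj : ∀ u ∈ G.neighborFinset v, G.Adj v u := fun u hu => (G.mem_neighborFinset v u).mp hu
    have hRnn : (0:ℚ) ≤ ∑ u ∈ G.neighborFinset v, fch (G.degree u) (G.degree v) :=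
      Finset.sum_nonneg fun u _ => fch_nonneg _ _
    rcases (show G.degree v = 2 ∨ G.degree v = 3 ∨ G.degree v = 4 ∨
        (5 ≤ G.degree v ∧ G.degree v ≤ 6) ∨ (7 ≤ G.degree v ∧ G.degree v ≤ 9) ∨
        10 ≤ G.degree v by omega) with h | h | h | ⟨h, h'⟩ | ⟨h, h'⟩ | h
    · -- degree 2
      rw [h] at hNcard ⊢
      have hS : ∑ u ∈ G.neighborFinset v, fch 2 (G.degree u) = 0 :=
        Finset.sum_eq_zero fun u _ => fch_two_left _
      have hR : ∑ u ∈ G.neighborFinset v, fch (G.degree u) 2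
          = ∑ u ∈ G.neighborFinset v, (2:ℚ)/3 := by
        refine Finset.sum_congr rfl fun u hu => ?_
        have : G.degree u ≠ 2 := c1 v u (hadj u hu) h
        exact fch_to_two _ (by have := hδ u; omega)
      rw [hS, hR, Finset.sum_const, hNcard]
      norm_num
    · -- degree 3
      rw [h] at hNcard hRnn ⊢
      by_cases hB : ∃ w ∈ G.neighborFinset v, G.degree w = 2
      · obtain ⟨w, hw, hdw⟩ := hB
        have hbig : ∀ u ∈ (G.neighborFinset v).erase w, 7 ≤ G.degree u := by
          intro u hu
          have hune : u ≠ w := Finset.ne_of_mem_erase hu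
          have huN : u ∈ G.neighborFinset v := Finset.mem_of_mem_erase hu
          have := h2 w v u (hadj w hw).symm (hadj u huN) (Ne.symm hune) hdw h
          omega
        have hR : (1:ℚ) ≤ ∑ u ∈ G.neighborFinset v, fch (G.degree u) 3 := by
          rw [← Finset.add_sum_erase _ _ hw]
          have h1' : (0:ℚ) ≤ fch (G.degree w) 3 := fch_nonneg _ _
          have h2' : ((G.neighborFinset v).erase w).card • ((1:ℚ)/2)
              ≤ ∑ u ∈ (G.neighborFinset v).erase w, fch (G.degree u) 3 :=
            Finset.card_nsmul_le_sum _ _ _ fun u hu => le_of_eq (fch_ge7 _ (hbig u hu)).symm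
          rw [Finset.card_erase_of_mem hw, hNcard] at h2'
          simp only [nsmul_eq_mul] at h2'
          push_cast at h2'
          linarith
        have hS : ∑ u ∈ G.neighborFinset v, fch 3 (G.degree u) = 2/3 := by
          rw [← Finset.add_sum_erase _ _ hw, hdw, fch_to_two 3 le_rfl,
            Finset.sum_eq_zero fun u hu => fch_three_left _ (by have := hbig u hu; omega)]
          norm_num
        rw [hS]
        push_cast
        linarith
      · push_neg at hB
        have hS : ∑ u ∈ G.neighborFinset v, fch 3 (G.degree u) = 0 :=
          Finset.sum_eq_zero fun u hu => fch_three_left _ (hB u hu)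
        have hR : (1:ℚ)/3 ≤ ∑ u ∈ G.neighborFinset v, fch (G.degree u) 3 := by
          by_cases hC : ∃ w ∈ G.neighborFinset v, G.degree w = 3
          · obtain ⟨w, hw, hdw⟩ := hC
            have hbig : ∀ u ∈ (G.neighborFinset v).erase w, 4 ≤ G.degree u := by
              intro u hu
              have hune : u ≠ w := Finset.ne_of_mem_erase hu
              have huN : u ∈ G.neighborFinset v := Finset.mem_of_mem_erase hu
              have hu2 : G.degree u ≠ 2 := hB u huN
              have hu3 : G.degree u ≠ 3 := by
                intro hu3
                exact absurd hdw (h3 u v w (hadj u huN).symm (hadj w hw) hune hu3 h)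
              have := hδ u; omega
            rw [← Finset.add_sum_erase _ _ hw]
            have h1' : (0:ℚ) ≤ fch (G.degree w) 3 := fch_nonneg _ _
            have h2' : ((G.neighborFinset v).erase w).card • ((1:ℚ)/6)
                ≤ ∑ u ∈ (G.neighborFinset v).erase w, fch (G.degree u) 3 :=
              Finset.card_nsmul_le_sum _ _ _ fun u hu => fch_ge4 _ (hbig u hu)
            rw [Finset.card_erase_of_mem hw, hNcard] at h2'
            simp only [nsmul_eq_mul] at h2'
            push_cast at h2'
            linarith
          · push_neg at hC
            have h2' : (G.neighborFinset v).card • ((1:ℚ)/6)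
                ≤ ∑ u ∈ G.neighborFinset v, fch (G.degree u) 3 :=
              Finset.card_nsmul_le_sum _ _ _ fun u hu => by
                have := hδ u; have := hB u hu; have := hC u hu
                exact fch_ge4 _ (by omega)
            rw [hNcard] at h2'
            simp only [nsmul_eq_mul] at h2'
            push_cast at h2'
            linarith
        rw [hS]
        push_cast
        linarith
    · -- degree 4
      rw [h] at hNcard hRnn ⊢
      by_cases hB : ∃ w ∈ G.neighborFinset v, G.degree w = 2
      · obtain ⟨w, hw, hdw⟩ := hB
        have hbig : ∀ u ∈ (G.neighborFinset v).erase w, 4 ≤ G.degree u := by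
          intro u hu
          have hune : u ≠ w := Finset.ne_of_mem_erase hu
          have huN : u ∈ G.neighborFinset v := Finset.mem_of_mem_erase hu
          have := h4 w v u (hadj w hw).symm (hadj u huN) (Ne.symm hune) hdw h
          omega
        have hS : ∑ u ∈ G.neighborFinset v, fch 4 (G.degree u) = 2/3 := by
          rw [← Finset.add_sum_erase _ _ hw, hdw, fch_to_two 4 (by norm_num),
            Finset.sum_eq_zero fun u hu => fch_four_big _ (hbig u hu)]
          norm_num
        rw [hS]
        push_cast
        linarith
      · push_neg at hB
        have hS : ∑ u ∈ G.neighborFinset v, fch 4 (G.degree u)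
            ≤ (G.neighborFinset v).card • ((1:ℚ)/6) :=
          Finset.sum_le_card_nsmul _ _ _ fun u hu => fch_four_left _ (hB u hu)
        rw [hNcard] at hS
        simp only [nsmul_eq_mul] at hS
        push_cast at hS ⊢
        linarith
    · -- degree 5 or 6
      have hcap : ∀ b, b ≠ 2 → fch (G.degree v) b ≤ 1/6 := fun b hb => fch_mid_left _ _ hb h'
      have honly := c5 v (by omega)
      have hS : ∑ u ∈ G.neighborFinset v, fch (G.degree v) (G.degree u)
          ≤ 2/3 + ((G.degree v : ℚ) - 1) * (1/6) := by
        by_cases hB : ∃ w ∈ G.neighborFinset v, G.degree w = 2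
        · obtain ⟨w, hw, hdw⟩ := hB
          rw [← Finset.add_sum_erase _ _ hw]
          have h1' : fch (G.degree v) (G.degree w) ≤ 2/3 := fch_le _ _
          have h2' : ∑ u ∈ (G.neighborFinset v).erase w, fch (G.degree v) (G.degree u)
              ≤ ((G.neighborFinset v).erase w).card • ((1:ℚ)/6) :=
            Finset.sum_le_card_nsmul _ _ _ fun u hu => by
              refine hcap _ fun hu2 => Finset.ne_of_mem_erase hu
                (honly u (Finset.mem_of_mem_erase hu) w hw hu2 hdw)
          rw [Finset.card_erase_of_mem hw, hNcard] at h2'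
          simp only [nsmul_eq_mul] at h2'
          have hcast : ((G.degree v - 1 : ℕ) : ℚ) = (G.degree v : ℚ) - 1 := by
            push_cast [Nat.cast_sub (by omega : 1 ≤ G.degree v)]; ring
          rw [hcast] at h2'
          linarith
        · push_neg at hB
          have h2' : ∑ u ∈ G.neighborFinset v, fch (G.degree v) (G.degree u)
              ≤ (G.neighborFinset v).card • ((1:ℚ)/6) :=
            Finset.sum_le_card_nsmul _ _ _ fun u hu => hcap _ (hB u hu)
          rw [hNcard] at h2'
          simp only [nsmul_eq_mul] at h2'
          have : (5:ℚ) ≤ (G.degree v : ℚ) := by exact_mod_cast h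
          linarith
      have hcst : (5:ℚ) ≤ (G.degree v : ℚ) := by exact_mod_cast h
      linarith
    · -- degree 7, 8 or 9
      have hcap : ∀ b, b ≠ 2 → fch (G.degree v) b ≤ 1/2 := fun b hb => fch_ne_two _ _ hb
      have honly := c5 v (by omega)
      have hS : ∑ u ∈ G.neighborFinset v, fch (G.degree v) (G.degree u)
          ≤ 2/3 + ((G.degree v : ℚ) - 1) * (1/2) := by
        by_cases hB : ∃ w ∈ G.neighborFinset v, G.degree w = 2
        · obtain ⟨w, hw, hdw⟩ := hB
          rw [← Finset.add_sum_erase _ _ hw]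
          have h1' : fch (G.degree v) (G.degree w) ≤ 2/3 := fch_le _ _
          have h2' : ∑ u ∈ (G.neighborFinset v).erase w, fch (G.degree v) (G.degree u)
              ≤ ((G.neighborFinset v).erase w).card • ((1:ℚ)/2) :=
            Finset.sum_le_card_nsmul _ _ _ fun u hu => by
              refine hcap _ fun hu2 => Finset.ne_of_mem_erase hu
                (honly u (Finset.mem_of_mem_erase hu) w hw hu2 hdw)
          rw [Finset.card_erase_of_mem hw, hNcard] at h2'
          simp only [nsmul_eq_mul] at h2'
          have hcast : ((G.degree v - 1 : ℕ) : ℚ) = (G.degree v : ℚ) - 1 := by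
            push_cast [Nat.cast_sub (by omega : 1 ≤ G.degree v)]; ring
          rw [hcast] at h2'
          linarith
        · push_neg at hB
          have h2' : ∑ u ∈ G.neighborFinset v, fch (G.degree v) (G.degree u)
              ≤ (G.neighborFinset v).card • ((1:ℚ)/2) :=
            Finset.sum_le_card_nsmul _ _ _ fun u hu => hcap _ (hB u hu)
          rw [hNcard] at h2'
          simp only [nsmul_eq_mul] at h2'
          have : (7:ℚ) ≤ (G.degree v : ℚ) := by exact_mod_cast h
          linarith
      have hcst : (7:ℚ) ≤ (G.degree v : ℚ) := by exact_mod_cast h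
      linarith
    · -- degree ≥ 10
      have hS : ∑ u ∈ G.neighborFinset v, fch (G.degree v) (G.degree u)
          ≤ (G.neighborFinset v).card • ((2:ℚ)/3) :=
        Finset.sum_le_card_nsmul _ _ _ fun u _ => fch_le _ _
      rw [hNcard] at hS
      simp only [nsmul_eq_mul] at hS
      have hcst : (10:ℚ) ≤ (G.degree v : ℚ) := by exact_mod_cast h
      linarith
  -- transfers cancel globally
  have hfil : ∀ v : V, G.neighborFinset v = Finset.univ.filter (fun u => G.Adj v u) := by
    intro v; ext u; simp [G.mem_neighborFinset]
  have hRS : ∑ v : V, ∑ u ∈ G.neighborFinset v, fch (G.degree u) (G.degree v)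
      = ∑ v : V, ∑ u ∈ G.neighborFinset v, fch (G.degree v) (G.degree u) := by
    simp_rw [hfil, Finset.sum_filter]
    rw [Finset.sum_comm]
    refine Finset.sum_congr rfl fun u _ => Finset.sum_congr rfl fun w _ => ?_
    by_cases hadj : G.Adj u w
    · rw [if_pos hadj, if_pos hadj.symm]
    · rw [if_neg hadj, if_neg (fun hc => hadj hc.symm)]
  -- global counting
  have hsum : (10:ℚ)/3 * (Fintype.card V : ℚ) ≤ ∑ v : V, (G.degree v : ℚ) := by
    have hkey := Finset.sum_le_sum (fun v (_ : v ∈ Finset.univ) => key v)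
    rw [Finset.sum_const, Finset.card_univ] at hkey
    simp only [nsmul_eq_mul] at hkey
    rw [Finset.sum_sub_distrib, Finset.sum_add_distrib, hRS] at hkey
    linarith [hkey]
  have hdegsum : (∑ v : V, G.degree v) = 2 * G.edgeFinset.card :=
    G.sum_degrees_eq_twice_card_edges
  have hn : (0:ℚ) < (Fintype.card V : ℚ) := by
    exact_mod_cast Fintype.card_pos
  rw [div_lt_iff₀ hn] at havg
  have hcast : (∑ v : V, (G.degree v : ℚ)) = 2 * (G.edgeFinset.card : ℚ) := by
    rw [← Nat.cast_sum, hdegsum]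
    push_cast
    ring
  rw [hcast] at hsum
  linarith
end

section
/- Let G be a finite simple graph with minimum degree exactly 3 and average degree strictly less than 4. Then G contains a path v1v2v3 with deg(v2) = 3 such that either deg(v1) ≤ 4 and deg(v3) ≤ 7, or deg(v1) = deg(v3) = 5, or {deg(v1), deg(v3)} = {5, 6}. -/
open SimpleGraph

noncomputable def fiveF (d : ℕ) : ℚ :=
  if d ≤ 4 then 0 else if d = 5 then 1/5 else if d = 6 then 1/3 else if d = 7 then 2/5 else 1/2

lemma fiveF_nonneg (d : ℕ) : 0 ≤ fiveF d := by
  unfold fiveF; split_ifs <;> norm_num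

lemma fiveF_ge8 {d : ℕ} (h : 8 ≤ d) : fiveF d = 1/2 := by
  unfold fiveF; split_ifs <;> first | omega | norm_num

lemma fiveF_ge7 {d : ℕ} (h : 7 ≤ d) : 2/5 ≤ fiveF d := by
  unfold fiveF; split_ifs <;> first | omega | norm_num

lemma fiveF_ge6 {d : ℕ} (h : 6 ≤ d) : 1/3 ≤ fiveF d := by
  unfold fiveF; split_ifs <;> first | omega | norm_num

lemma fiveF_five : fiveF 5 = 1/5 := by norm_num [fiveF]

lemma fiveF_three : fiveF 3 = 0 := by norm_num [fiveF]

lemma fiveF_mul_le {d : ℕ} (h : 4 ≤ d) : (d : ℚ) * fiveF d ≤ (d : ℚ) - 4 := by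
  unfold fiveF
  split_ifs with h1 h2 h3 h4
  · have : d = 4 := by omega
    subst this; norm_num
  · subst h2; norm_num
  · subst h3; norm_num
  · subst h4; norm_num
  · have h8 : (8 : ℚ) ≤ d := by exact_mod_cast (by omega : 8 ≤ d)
    linarith


lemma pairLow {x y : ℕ}
    (h : ¬((x ≤ 4 ∧ y ≤ 7) ∨ (x = 5 ∧ y = 5) ∨ (x = 5 ∧ y = 6) ∨ (x = 6 ∧ y = 5)))
    (hx : x ≤ 4) : 8 ≤ y := by omega

lemma pairFive {x y : ℕ}
    (h : ¬((x ≤ 4 ∧ y ≤ 7) ∨ (x = 5 ∧ y = 5) ∨ (x = 5 ∧ y = 6) ∨ (x = 6 ∧ y = 5)))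
    (hx : x = 5) (hy : ¬ y ≤ 4) : 7 ≤ y := by omega

lemma pairFive' {x y : ℕ}
    (h : ¬((x ≤ 4 ∧ y ≤ 7) ∨ (x = 5 ∧ y = 5) ∨ (x = 5 ∧ y = 6) ∨ (x = 6 ∧ y = 5)))
    (hy : y = 5) (hx : ¬ x ≤ 4) : 7 ≤ x := by omega

set_option maxHeartbeats 1000000 in
lemma keyF (a b c : ℕ)
    (hab : ¬((a ≤ 4 ∧ b ≤ 7) ∨ (a = 5 ∧ b = 5) ∨ (a = 5 ∧ b = 6) ∨ (a = 6 ∧ b = 5)))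
    (hac : ¬((a ≤ 4 ∧ c ≤ 7) ∨ (a = 5 ∧ c = 5) ∨ (a = 5 ∧ c = 6) ∨ (a = 6 ∧ c = 5)))
    (hba : ¬((b ≤ 4 ∧ a ≤ 7) ∨ (b = 5 ∧ a = 5) ∨ (b = 5 ∧ a = 6) ∨ (b = 6 ∧ a = 5)))
    (hbc : ¬((b ≤ 4 ∧ c ≤ 7) ∨ (b = 5 ∧ c = 5) ∨ (b = 5 ∧ c = 6) ∨ (b = 6 ∧ c = 5)))
    (hca : ¬((c ≤ 4 ∧ a ≤ 7) ∨ (c = 5 ∧ a = 5) ∨ (c = 5 ∧ a = 6) ∨ (c = 6 ∧ a = 5)))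
    (hcb : ¬((c ≤ 4 ∧ b ≤ 7) ∨ (c = 5 ∧ b = 5) ∨ (c = 5 ∧ b = 6) ∨ (c = 6 ∧ b = 5))) :
    1 ≤ fiveF a + fiveF b + fiveF c := by
  have hA := fiveF_nonneg a
  have hB := fiveF_nonneg b
  have hC := fiveF_nonneg c
  by_cases ha4 : a ≤ 4
  · rw [fiveF_ge8 (pairLow hab ha4), fiveF_ge8 (pairLow hac ha4)]; linarith
  by_cases hb4 : b ≤ 4
  · rw [fiveF_ge8 (pairLow hba hb4), fiveF_ge8 (pairLow hbc hb4)]; linarith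
  by_cases hc4 : c ≤ 4
  · rw [fiveF_ge8 (pairLow hca hc4), fiveF_ge8 (pairLow hcb hc4)]; linarith
  by_cases ha5 : a = 5
  · have h1 := fiveF_ge7 (pairFive hab ha5 hb4)
    have h2 := fiveF_ge7 (pairFive hac ha5 hc4)
    rw [ha5, fiveF_five]; linarith
  by_cases hb5 : b = 5
  · have h1 := fiveF_ge7 (pairFive' hab hb5 ha4)
    have h2 := fiveF_ge7 (pairFive hbc hb5 hc4)
    rw [hb5, fiveF_five]; linarith
  by_cases hc5 : c = 5
  · have h1 := fiveF_ge7 (pairFive' hac hc5 ha4)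
    have h2 := fiveF_ge7 (pairFive' hbc hc5 hb4)
    rw [hc5, fiveF_five]; linarith
  · have h1 := fiveF_ge6 (show 6 ≤ a by omega)
    have h2 := fiveF_ge6 (show 6 ≤ b by omega)
    have h3 := fiveF_ge6 (show 6 ≤ c by omega)
    linarith

theorem stmt_9 {V : Type} [Fintype V] [DecidableEq V] (G : SimpleGraph V)
    [DecidableRel G.Adj]
    (hδ : (∀ v, 3 ≤ G.degree v) ∧ (∃ v, G.degree v = 3))
    (havg : (2 * G.edgeFinset.card : ℚ) / Fintype.card V < 4) :
    ∃ v₁ v₂ v₃ : V, G.Adj v₁ v₂ ∧ G.Adj v₂ v₃ ∧ v₁ ≠ v₃ ∧ G.degree v₂ = 3 ∧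
      ((G.degree v₁ ≤ 4 ∧ G.degree v₃ ≤ 7) ∨
       (G.degree v₁ = 5 ∧ G.degree v₃ = 5) ∨
       (G.degree v₁ = 5 ∧ G.degree v₃ = 6) ∨
       (G.degree v₁ = 6 ∧ G.degree v₃ = 5)) := by
  by_contra hcon
  simp only [not_exists, not_and] at hcon
  obtain ⟨hmin, w, hw⟩ := hδ
  have hne : Nonempty V := ⟨w⟩
  have hn : (0 : ℚ) < Fintype.card V := by exact_mod_cast Fintype.card_pos
  have hsum : ∑ v : V, (G.degree v : ℚ) < 4 * Fintype.card V := by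
    have h1 : ∑ v : V, G.degree v = 2 * G.edgeFinset.card :=
      G.sum_degrees_eq_twice_card_edges
    rw [div_lt_iff₀ hn] at havg
    have h2 : ((∑ v : V, G.degree v : ℕ) : ℚ) = 2 * G.edgeFinset.card := by
      exact_mod_cast h1
    rw [Nat.cast_sum] at h2
    rw [h2]
    exact havg
  set give : V → V → ℚ := fun u x => if G.degree x = 3 then fiveF (G.degree u) else 0
    with hgive
  have hswap : ∑ v : V, ∑ u ∈ G.neighborFinset v, give u v
      = ∑ v : V, ∑ u ∈ G.neighborFinset v, give v u := by
    have lhs : ∑ v : V, ∑ u ∈ G.neighborFinset v, give u v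
        = ∑ v : V, ∑ u : V, if G.Adj v u then give u v else 0 :=
      Finset.sum_congr rfl (fun v _ => by
        rw [neighborFinset_eq_filter, Finset.sum_filter])
    have rhs : ∑ v : V, ∑ u ∈ G.neighborFinset v, give v u
        = ∑ v : V, ∑ u : V, if G.Adj v u then give v u else 0 :=
      Finset.sum_congr rfl (fun v _ => by
        rw [neighborFinset_eq_filter, Finset.sum_filter])
    rw [lhs, rhs, Finset.sum_comm]
    apply Finset.sum_congr rfl
    intro v _
    apply Finset.sum_congr rfl
    intro u _
    exact if_congr (G.adj_comm u v) rfl rfl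
  have hlocal : ∀ v : V, (∑ u ∈ G.neighborFinset v, give v u)
      - (∑ u ∈ G.neighborFinset v, give u v) ≤ (G.degree v : ℚ) - 4 := by
    intro v
    by_cases h3 : G.degree v = 3
    · have hout : ∑ u ∈ G.neighborFinset v, give v u = 0 := by
        apply Finset.sum_eq_zero
        intro u _
        simp only [hgive, h3, fiveF_three]
        split_ifs <;> simp
      have hcard : (G.neighborFinset v).card = 3 := by
        rw [card_neighborFinset_eq_degree]; exact h3
      obtain ⟨a, b, c, hab, hac, hbc, habc⟩ := Finset.card_eq_three.mp hcard
      have hadj : ∀ x, x ∈ G.neighborFinset v → G.Adj v x := by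
        intro x hx; exact (mem_neighborFinset G v x).mp hx
      have ha : G.Adj v a := hadj a (by rw [habc]; simp)
      have hb : G.Adj v b := hadj b (by rw [habc]; simp)
      have hc : G.Adj v c := hadj c (by rw [habc]; simp)
      have hin : ∑ u ∈ G.neighborFinset v, give u v
          = fiveF (G.degree a) + fiveF (G.degree b) + fiveF (G.degree c) := by
        rw [habc]
        rw [Finset.sum_insert (by simp [hab, hac]), Finset.sum_insert (by simp [hbc]),
          Finset.sum_singleton]
        simp only [hgive, if_pos h3]
        ring
      have hkey := keyF (G.degree a) (G.degree b) (G.degree c)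
        (hcon a v b ha.symm hb hab h3) (hcon a v c ha.symm hc hac h3)
        (hcon b v a hb.symm ha (Ne.symm hab) h3) (hcon b v c hb.symm hc hbc h3)
        (hcon c v a hc.symm ha (Ne.symm hac) h3) (hcon c v b hc.symm hb (Ne.symm hbc) h3)
      rw [hout, hin, h3]
      norm_num
      linarith
    · have hin : ∑ u ∈ G.neighborFinset v, give u v = 0 := by
        apply Finset.sum_eq_zero
        intro u _
        simp [hgive, h3]
      have hout : ∑ u ∈ G.neighborFinset v, give v u
          ≤ (G.degree v : ℚ) * fiveF (G.degree v) := by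
        have step1 : ∑ u ∈ G.neighborFinset v, give v u
            ≤ ∑ _u ∈ G.neighborFinset v, fiveF (G.degree v) := by
          apply Finset.sum_le_sum
          intro u _
          simp only [hgive]
          split_ifs
          · exact le_rfl
          · exact fiveF_nonneg _
        have step2 : ∑ _u ∈ G.neighborFinset v, fiveF (G.degree v)
            = (G.degree v : ℚ) * fiveF (G.degree v) := by
          rw [Finset.sum_const, card_neighborFinset_eq_degree, nsmul_eq_mul]
        linarith [step1, step2.le, step2.ge]
      have h4 : 4 ≤ G.degree v := by have := hmin v; omega
      have hmul := fiveF_mul_le h4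
      rw [hin]
      linarith
  have htot : (0 : ℚ) ≤ ∑ v : V, ((G.degree v : ℚ) - 4) := by
    have h1 : ∑ v : V, ((∑ u ∈ G.neighborFinset v, give v u)
        - (∑ u ∈ G.neighborFinset v, give u v)) ≤ ∑ v : V, ((G.degree v : ℚ) - 4) :=
      Finset.sum_le_sum (fun v _ => hlocal v)
    have h2 : ∑ v : V, ((∑ u ∈ G.neighborFinset v, give v u)
        - (∑ u ∈ G.neighborFinset v, give u v)) = 0 := by
      rw [Finset.sum_sub_distrib, hswap, sub_self]
    linarith
  rw [Finset.sum_sub_distrib, Finset.sum_const, Finset.card_univ, nsmul_eq_mul] at htot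
  linarith
end

section
/- Let G be a connected plane graph with minimum degree at least 2 and girth at least 7. Then G contains a path on three vertices whose degree sum is at most 9. -/
open SimpleGraph

/-- A combinatorial (oriented, 2-cell) embedding of a simple graph, given by a
rotation-style successor permutation on darts whose cycles are exactly the sets
of darts leaving a common vertex.  Faces are the cycles of the permutation
`d ↦ next d.symm`. -/
structure PlaneEmbedding {V : Type} (G : SimpleGraph V) where
  next : Equiv.Perm G.Dart
  next_fst : ∀ d : G.Dart, (next d).fst = d.fst
  cycle_of_fst : ∀ d d' : G.Dart, d.fst = d'.fst → next.SameCycle d d'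

namespace PlaneEmbedding

variable {V : Type} {G : SimpleGraph V} (E : PlaneEmbedding G)

/-- The face permutation on darts. -/
def facePerm : Equiv.Perm G.Dart :=
  (Function.Involutive.toPerm Dart.symm fun d => Dart.symm_symm d).trans E.next

/-- The setoid on darts identifying darts lying on the same face. -/
def faceSetoid : Setoid G.Dart :=
  ⟨E.facePerm.SameCycle, ⟨fun _ => Equiv.Perm.SameCycle.refl _ _,
    Equiv.Perm.SameCycle.symm, Equiv.Perm.SameCycle.trans⟩⟩

/-- The number of faces of the embedding. -/
noncomputable def faceCount : ℕ := Nat.card (Quotient E.faceSetoid)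

/-- The size (degree) of the face containing the dart `d`. -/
noncomputable def faceSize (d : G.Dart) : ℕ :=
  Nat.card {d' : G.Dart // E.facePerm.SameCycle d d'}

/-- Euler's formula `|V| - |E| + |F| = 2`: the embedding is in the plane. -/
def EulerFormula : Prop :=
  (Nat.card V : ℤ) - Nat.card G.edgeSet + E.faceCount = 2

end PlaneEmbedding

/-!
Discharging. Every dart `d` carries the charge `1/2 - 1/deg d.fst`. The darts leaving a vertex `v`
carry `deg v / 2 - 1` in total, so the total charge is `|E| - |V| = |F| - 2` by Euler's formula.
Suppose every path on three vertices has degree sum at least `10`. The boundary walk of a face is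
closed and, as `δ ≥ 2`, non-backtracking, so the girth forces its length `m` to be at least `7`,
and the degrees along it form a cyclic sequence whose windows of three consecutive terms sum to at
least `10`. After capping degrees at `6`, every window carries charge at least `1/3`, which settles
`m ≥ 9`; for `m = 7, 8` a pruned exhaustive search does. Hence each face carries charge at least
`1`, giving `|F| ≤ |F| - 2`.
-/

open Finset Function

theorem Function.Periodic.sum_range_comp_add {M : Type*} [AddCancelCommMonoid M] {f : ℕ → M}
    {n : ℕ} (hf : Periodic f n) (i : ℕ) : ∑ j ∈ range n, f (j + i) = ∑ j ∈ range n, f j := by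
  induction i with
  | zero => rfl
  | succ i ih =>
    have h := (sum_range_succ' (fun j => f (j + i)) n).symm.trans
      (sum_range_succ (fun j => f (j + i)) n)
    simp only [zero_add, add_comm n i, hf i, ih, add_right_comm _ 1 i, add_assoc] at h
    exact add_right_cancel h

theorem Equiv.Perm.sum_sameCycle_eq_sum_range_minimalPeriod {α M : Type*} [Fintype α]
    [DecidableEq α] [AddCommMonoid M] (σ : Perm α) (x : α) (f : α → M) :
    ∑ y with σ.SameCycle x y, f y = ∑ k ∈ range (minimalPeriod σ x), f (σ^[k] x) := by
  have hpos := minimalPeriod_pos_of_mem_periodicPts (σ.injective.mem_periodicPts x)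
  have horbit :
      ({y | σ.SameCycle x y} : Finset α) = (range (minimalPeriod σ x)).image (σ^[·] x) := by
    ext y
    simp only [mem_filter, mem_univ, true_and, mem_image, mem_range]
    constructor
    · rintro hxy
      obtain ⟨i, _, rfl⟩ := hxy.exists_pow_eq'
      exact ⟨i % minimalPeriod σ x, Nat.mod_lt _ hpos, by
        rw [iterate_mod_minimalPeriod_eq, Perm.coe_pow]⟩
    · rintro ⟨k, _, rfl⟩
      exact ⟨k, by rw [zpow_natCast, Perm.coe_pow]⟩
  rw [horbit, sum_image fun a ha b hb hab =>
    iterate_injOn_Iio_minimalPeriod (mem_range.mp ha) (mem_range.mp hb) hab]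

def cornerWeight (n : ℕ) : ℚ := 1 / 2 - 1 / n

theorem cornerWeight_le_cornerWeight {a b : ℕ} (ha : 0 < a) (hab : a ≤ b) :
    cornerWeight a ≤ cornerWeight b := by
  unfold cornerWeight
  gcongr

def scaledWeight (n : ℕ) : ℕ := 30 - 60 / n

theorem scaledWeight_eq {n : ℕ} (hn : n ∈ Icc 2 6) :
    (scaledWeight n : ℚ) = 60 * cornerWeight n := by
  obtain ⟨h2, h6⟩ := mem_Icc.mp hn
  interval_cases n <;> norm_num [scaledWeight, cornerWeight]

theorem twenty_le_scaledWeight_add {a b c : ℕ} (ha : a ∈ Icc 2 6) (hb : b ∈ Icc 2 6)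
    (hc : c ∈ Icc 2 6) (h : 10 ≤ a + b + c) :
    20 ≤ scaledWeight a + scaledWeight b + scaledWeight c := by
  have key : ∀ a ∈ Icc 2 6, ∀ b ∈ Icc 2 6, ∀ c ∈ Icc 2 6, 10 ≤ a + b + c →
      20 ≤ scaledWeight a + scaledWeight b + scaledWeight c := by decide
  exact key a ha b hb c hc h

/-- `sixtyCert p q r acc a b` checks that every sequence starting `p, q, …`, ending `…, a, b`, of
scaled weight `acc`, extended by `r` further values in `[2, 6]` to a cyclic sequence all of whose
windows of three sum to at least `10`, has scaled weight at least `60`. -/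
def sixtyCert (p q : ℕ) : ℕ → ℕ → ℕ → ℕ → Bool
  | 0, acc, a, b => 60 ≤ acc || a + b + p < 10 || b + p + q < 10
  | r + 1, acc, a, b => 60 ≤ acc ||
      (List.range' 2 5).all fun c => a + b + c < 10 || sixtyCert p q r (acc + scaledWeight c) b c

theorem sixtyCert_seven_eight : ∀ s ∈ [5, 6], (List.range' 2 5).all fun p =>
    (List.range' 2 5).all fun q => sixtyCert p q s (scaledWeight p + scaledWeight q) p q := by
  decide

section CyclicSequence

variable {y : ℕ → ℕ} {n : ℕ}

theorem sixty_le_sum_of_sixtyCert (hy : ∀ k, y k ∈ Icc 2 6) (hper : Periodic y n)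
    (hwin : ∀ k, 10 ≤ y k + y (k + 1) + y (k + 2)) (r k : ℕ) (hn : k + 2 + r = n)
    (hcert : sixtyCert (y 0) (y 1) r (∑ j ∈ range (k + 2), scaledWeight (y j))
      (y k) (y (k + 1))) :
    60 ≤ ∑ j ∈ range n, scaledWeight (y j) := by
  induction r generalizing k with
  | zero =>
    subst hn
    have h0 : y (k + 2) = y 0 := by simpa using hper 0
    have h1 : y (k + 3) = y 1 := by simpa [add_comm 1] using hper 1
    have w0 := hwin k
    have w1 : 10 ≤ y (k + 1) + y (k + 2) + y (k + 3) := hwin (k + 1)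
    simp only [sixtyCert, Bool.or_eq_true, decide_eq_true_eq] at hcert
    rw [add_zero]
    omega
  | succ r ih =>
    simp only [sixtyCert, Bool.or_eq_true, decide_eq_true_eq, List.all_eq_true] at hcert
    rcases hcert with hacc | hext
    · exact hacc.trans (sum_le_sum_of_subset (range_subset_range.mpr (by omega)))
    · have hk := hext (y (k + 2))
        (by simpa [List.mem_range'_1, Nat.lt_succ_iff] using hy (k + 2))
      refine ih (k + 1) (by omega) ?_
      rw [sum_range_succ _ (k + 2)]
      exact hk.resolve_left (by have := hwin k; omega)

theorem sixty_le_sum_scaledWeight (hy : ∀ k, y k ∈ Icc 2 6) (hper : Periodic y n)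
    (hwin : ∀ k, 10 ≤ y k + y (k + 1) + y (k + 2)) (hn : 7 ≤ n) :
    60 ≤ ∑ j ∈ range n, scaledWeight (y j) := by
  by_cases hn9 : 9 ≤ n
  · have hshift (i : ℕ) : ∑ j ∈ range n, scaledWeight (y (j + i)) =
        ∑ j ∈ range n, scaledWeight (y j) := (hper.comp scaledWeight).sum_range_comp_add i
    have : 20 * n ≤ 3 * ∑ j ∈ range n, scaledWeight (y j) :=
      calc 20 * n = ∑ _j ∈ range n, 20 := by simp [mul_comm]
        _ ≤ ∑ j ∈ range n, (scaledWeight (y j) + scaledWeight (y (j + 1)) +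
              scaledWeight (y (j + 2))) :=
          sum_le_sum fun j _ => twenty_le_scaledWeight_add (hy _) (hy _) (hy _) (hwin j)
        _ = 3 * ∑ j ∈ range n, scaledWeight (y j) := by
          rw [sum_add_distrib, sum_add_distrib, hshift, hshift]; ring
    omega
  · have hcert := sixtyCert_seven_eight (n - 2) (by simp; omega)
    simp only [List.all_eq_true, List.mem_range'_1] at hcert
    refine sixty_le_sum_of_sixtyCert hy hper hwin (n - 2) 0 (by omega) ?_
    simpa [sum_range_succ] using hcert (y 0) (by simpa [Nat.lt_succ_iff] using hy 0) (y 1)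
      (by simpa [Nat.lt_succ_iff] using hy 1)

end CyclicSequence

theorem one_le_sum_cornerWeight {x : ℕ → ℕ} {n : ℕ} (hx : ∀ k, 2 ≤ x k) (hper : Periodic x n)
    (hwin : ∀ k, 10 ≤ x k + x (k + 1) + x (k + 2)) (hn : 7 ≤ n) :
    1 ≤ ∑ j ∈ range n, cornerWeight (x j) := by
  set y := fun k => min (x k) 6
  have hy (k : ℕ) : y k ∈ Icc 2 6 := mem_Icc.mpr ⟨le_min (hx k) (by norm_num), min_le_right _ _⟩
  have hywin (k : ℕ) : 10 ≤ y k + y (k + 1) + y (k + 2) := by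
    have := hwin k; have := hx k; have := hx (k + 1); have := hx (k + 2)
    simp only [y]; omega
  have h60 : (60 : ℚ) ≤ ∑ j ∈ range n, (scaledWeight (y j) : ℚ) := by
    exact_mod_cast sixty_le_sum_scaledWeight hy (fun k => by simp only [y, hper k]) hywin hn
  calc (1 : ℚ) ≤ ∑ j ∈ range n, cornerWeight (y j) := by
        simp only [scaledWeight_eq (hy _), ← mul_sum] at h60; linarith
    _ ≤ ∑ j ∈ range n, cornerWeight (x j) := sum_le_sum fun j _ =>
        cornerWeight_le_cornerWeight (by have := (mem_Icc.mp (hy j)).1; omega) (min_le_left _ _)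

namespace SimpleGraph

variable {V : Type*} {G : SimpleGraph V}

def Walk.ofAdjSeq (v : ℕ → V) (hadj : ∀ k, G.Adj (v k) (v (k + 1))) (i : ℕ) :
    (n : ℕ) → G.Walk (v i) (v (i + n))
  | 0 => .nil
  | n + 1 => (ofAdjSeq v hadj i n).concat (hadj (i + n))

namespace Walk

variable (v : ℕ → V) (hadj : ∀ k, G.Adj (v k) (v (k + 1))) (i : ℕ)

@[simp]
theorem length_ofAdjSeq (n : ℕ) : (ofAdjSeq v hadj i n).length = n := by
  induction n with
  | zero => rfl
  | succ n ih => rw [ofAdjSeq, length_concat, ih]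

theorem support_ofAdjSeq (n : ℕ) :
    (ofAdjSeq v hadj i n).support = (List.range (n + 1)).map fun k => v (i + k) := by
  induction n with
  | zero => rfl
  | succ n ih =>
    rw [ofAdjSeq, support_concat, ih, List.range_succ (n := n + 1), List.map_append]; rfl

end Walk

theorem egirth_le_of_nonbacktracking {v : ℕ → V} (hadj : ∀ k, G.Adj (v k) (v (k + 1)))
    (hnb : ∀ k, v (k + 2) ≠ v k) {i m : ℕ} (hm : 0 < m) (hv : v (i + m) = v i) :
    G.egirth ≤ m := by
  classical
  have hex : ∃ g, 0 < g ∧ ∃ i, v (i + g) = v i := ⟨m, hm, i, hv⟩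
  obtain ⟨hg, j, hj⟩ := Nat.find_spec hex
  set g := Nat.find hex
  have hmin (a b : ℕ) (hab : a < b) (hbg : b < a + g) : v a ≠ v b := fun h =>
    Nat.find_min hex (by omega : b - a < g)
      ⟨by omega, a, by rwa [Nat.add_sub_cancel' hab.le, eq_comm]⟩
  have hg3 : 3 ≤ g := by
    have h1 : g ≠ 1 := fun h => (hadj j).ne' (h ▸ hj)
    have h2 : g ≠ 2 := fun h => hnb j (h ▸ hj)
    omega
  have hend : v (j + 1 + (g - 1)) = v j := by rwa [add_assoc, Nat.add_sub_cancel' hg]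
  let p := (Walk.ofAdjSeq v hadj (j + 1) (g - 1)).copy rfl hend
  have hp : p.IsPath := by
    rw [Walk.isPath_def, Walk.support_copy, Walk.support_ofAdjSeq]
    refine List.nodup_range.map_on fun a ha b hb hab => ?_
    simp only [List.mem_range] at ha hb
    rcases lt_trichotomy a b with h | rfl | h
    · exact absurd hab (hmin _ _ (by omega) (by omega))
    · rfl
    · exact absurd hab.symm (hmin _ _ (by omega) (by omega))
  have hlen : (Walk.cons (hadj j) p).length = g := by
    rw [Walk.length_cons, Walk.length_copy, Walk.length_ofAdjSeq]; omega
  have hc : (Walk.cons (hadj j) p).IsCycle :=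
    Walk.isCycle_iff_isPath_tail_and_le_length.mpr ⟨by simpa using hp, hlen ▸ hg3⟩
  calc G.egirth ≤ (Walk.cons (hadj j) p).length := egirth_le_length hc
    _ ≤ m := by rw [hlen]; exact_mod_cast Nat.find_min' hex ⟨hm, i, hv⟩

theorem sum_darts_cornerWeight [Fintype V] [DecidableEq V] [DecidableRel G.Adj]
    (h : ∀ v, G.degree v ≠ 0) :
    ∑ d : G.Dart, cornerWeight (G.degree d.fst) = #G.edgeFinset - Fintype.card V := by
  have hvertex (v : V) : ∑ d : G.Dart with d.fst = v, cornerWeight (G.degree d.fst) =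
      G.degree v / 2 - 1 := by
    rw [sum_congr rfl fun d hd => by rw [(mem_filter.mp hd).2], sum_const,
      dart_fst_fiber_card_eq_degree, nsmul_eq_mul, cornerWeight]
    field_simp [Nat.cast_ne_zero.mpr (h v)]
  rw [← sum_fiberwise univ fun d : G.Dart => d.fst, sum_congr rfl fun v _ => hvertex v,
    sum_sub_distrib, ← sum_div, ← Nat.cast_sum, sum_degrees_eq_twice_card_edges]
  simp

end SimpleGraph

namespace PlaneEmbedding

variable {V : Type} {G : SimpleGraph V} (E : PlaneEmbedding G)

theorem facePerm_fst (d : G.Dart) : (E.facePerm d).fst = d.snd :=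
  E.next_fst d.symm

theorem fst_iterate_facePerm_succ (d : G.Dart) (k : ℕ) :
    (E.facePerm^[k + 1] d).fst = (E.facePerm^[k] d).snd := by
  rw [iterate_succ_apply', facePerm_fst]

section Fintype

variable [Fintype V] [DecidableRel G.Adj]

theorem next_ne_self (hδ : ∀ v, 2 ≤ G.degree v) (d : G.Dart) : E.next d ≠ d := by
  intro h
  obtain ⟨u, hu, hne⟩ := exists_mem_ne
    (by rw [card_neighborFinset_eq_degree]; exact hδ d.fst : 1 < #(G.neighborFinset d.fst))
    d.snd
  obtain ⟨k, hk⟩ := E.cycle_of_fst d ⟨(d.fst, u), (mem_neighborFinset _ _ _).mp hu⟩ rfl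
  rw [(show IsFixedPt E.next d from h).perm_zpow k] at hk
  exact hne (congrArg (fun d : G.Dart => d.snd) hk).symm

theorem facePerm_snd_ne (hδ : ∀ v, 2 ≤ G.degree v) (d : G.Dart) :
    (E.facePerm d).snd ≠ d.fst := fun h =>
  E.next_ne_self hδ d.symm (Dart.ext _ _ (Prod.ext (E.facePerm_fst d) h))

theorem seven_le_minimalPeriod_facePerm (hδ : ∀ v, 2 ≤ G.degree v) (hgirth : 7 ≤ G.egirth)
    (d : G.Dart) :
    7 ≤ minimalPeriod E.facePerm d := by
  have hadj (k : ℕ) : G.Adj (E.facePerm^[k] d).fst (E.facePerm^[k + 1] d).fst :=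
    E.fst_iterate_facePerm_succ d k ▸ (E.facePerm^[k] d).adj
  have hnb (k : ℕ) : (E.facePerm^[k + 2] d).fst ≠ (E.facePerm^[k] d).fst := by
    rw [E.fst_iterate_facePerm_succ d (k + 1), iterate_succ_apply']
    exact E.facePerm_snd_ne hδ _
  have hpos := minimalPeriod_pos_of_mem_periodicPts (E.facePerm.injective.mem_periodicPts d)
  have := egirth_le_of_nonbacktracking hadj hnb hpos (by rw [zero_add, iterate_minimalPeriod]; rfl)
  exact_mod_cast hgirth.trans this

theorem one_le_sum_cornerWeight_face (hδ : ∀ v, 2 ≤ G.degree v) (hgirth : 7 ≤ G.egirth)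
    (hlight : ∀ v₁ v₂ v₃, G.Adj v₁ v₂ → G.Adj v₂ v₃ → v₁ ≠ v₃ →
      9 < G.degree v₁ + G.degree v₂ + G.degree v₃) (d : G.Dart) :
    1 ≤ ∑ k ∈ range (minimalPeriod E.facePerm d),
      cornerWeight (G.degree (E.facePerm^[k] d).fst) := by
  refine one_le_sum_cornerWeight (fun k => hδ _) (fun k => ?_) (fun k => ?_)
    (E.seven_le_minimalPeriod_facePerm hδ hgirth d)
  · rw [iterate_add_apply, iterate_minimalPeriod]
  · have hne : (E.facePerm^[k + 1] d).snd ≠ (E.facePerm^[k] d).fst := by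
      rw [iterate_succ_apply']; exact E.facePerm_snd_ne hδ _
    have h := hlight _ _ _ (E.facePerm^[k] d).adj
      (E.fst_iterate_facePerm_succ d k ▸ (E.facePerm^[k + 1] d).adj) hne.symm
    rwa [E.fst_iterate_facePerm_succ d (k + 1), E.fst_iterate_facePerm_succ d k]

theorem faceCount_le_sum (f : G.Dart → ℚ)
    (hf : ∀ d, 1 ≤ ∑ k ∈ range (minimalPeriod E.facePerm d), f (E.facePerm^[k] d)) :
    (E.faceCount : ℚ) ≤ ∑ d, f d := by
  classical
  have hface (q : Quotient E.faceSetoid) : 1 ≤ ∑ d with ⟦d⟧ = q, f d := by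
    obtain ⟨d, rfl⟩ := Quotient.exists_rep q
    have hclass (d' : G.Dart) :
        (⟦d'⟧ : Quotient E.faceSetoid) = ⟦d⟧ ↔ E.facePerm.SameCycle d d' := by
      rw [Quotient.eq]; exact Equiv.Perm.sameCycle_comm
    simpa only [hclass, Equiv.Perm.sum_sameCycle_eq_sum_range_minimalPeriod] using hf d
  calc (E.faceCount : ℚ) = ∑ _q : Quotient E.faceSetoid, 1 := by
        simp [faceCount, Nat.card_eq_fintype_card]
    _ ≤ ∑ q : Quotient E.faceSetoid, ∑ d with ⟦d⟧ = q, f d := sum_le_sum fun q _ => hface q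
    _ = ∑ d, f d := sum_fiberwise univ _ f

end Fintype

end PlaneEmbedding

theorem stmt_13_general {V : Type} [Fintype V] (G : SimpleGraph V)
    [DecidableRel G.Adj]
    (hδ : ∀ v, 2 ≤ G.degree v)
    (E : PlaneEmbedding G) (hE : E.EulerFormula)
    (hgirth : 7 ≤ G.egirth) :
    ∃ v₁ v₂ v₃ : V, G.Adj v₁ v₂ ∧ G.Adj v₂ v₃ ∧ v₁ ≠ v₃ ∧
      G.degree v₁ + G.degree v₂ + G.degree v₃ ≤ 9 := by
  classical
  by_contra! hlight
  have hfaces := E.faceCount_le_sum (fun d => cornerWeight (G.degree d.fst))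
    (E.one_le_sum_cornerWeight_face hδ hgirth hlight)
  rw [sum_darts_cornerWeight fun v => by have := hδ v; omega] at hfaces
  have hEuler : (Fintype.card V : ℚ) - #G.edgeFinset + E.faceCount = 2 := by
    have h := hE
    rw [PlaneEmbedding.EulerFormula, Nat.card_eq_fintype_card, Nat.card_eq_fintype_card,
      ← edgeFinset_card] at h
    exact_mod_cast h
  linarith

theorem stmt_13 {V : Type} [Fintype V] [DecidableEq V] (G : SimpleGraph V)
    [DecidableRel G.Adj]
    (hconn : G.Connected)
    (hδ : ∀ v, 2 ≤ G.degree v)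
    (E : PlaneEmbedding G) (hE : E.EulerFormula)
    (hgirth : 7 ≤ G.egirth) :
    ∃ v₁ v₂ v₃ : V, G.Adj v₁ v₂ ∧ G.Adj v₂ v₃ ∧ v₁ ≠ v₃ ∧
      G.degree v₁ + G.degree v₂ + G.degree v₃ ≤ 9 :=
  stmt_13_general G hδ E hE hgirth
end
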